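/- arXiv:2208.06846 — 8 statements merged into one kernel-verified Lean document; each statement's English description precedes it below -/
import Mathlib

section
/- For every positive integer l and every nonnegative integer n, the number of representations of n as a sum a + a' with a < a' both in A_l equals the number of representations of n as b + b' with b < b' both in B_l, where A_l is the set of integers in [0, 2^l - 1] with an even number of 1's in binary and B_l is the set of those with an odd number of 1's in binary. -/
/-!
Let `k` be the highest bit in which `a < b` differ, so `a` has a `0` and `b` a `1` there.
Flipping bit `k` in both numbers and swapping them, `(a, b) ↦ (b ^^^ 2ᵏ, a ^^^ 2ᵏ)`, keeps the
sum (one entry loses `2ᵏ`, the other gains it), keeps the order, keeps both entries below `2ˡ`,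
and changes the parity of the binary digit sum of each entry. Since `a ^^^ b` is unchanged, the
map is an involution, so it is a bijection between the representations of `n` from `A_l` and
those from `B_l`.
-/

open Set

/-- R S n: number of pairs (s,s') with s,s' ∈ S, s < s', s+s' = n. -/
noncomputable def R (S : Set ℕ) (n : ℕ) : ℕ :=
  {p : ℕ × ℕ | p.1 ∈ S ∧ p.2 ∈ S ∧ p.1 < p.2 ∧ p.1 + p.2 = n}.ncard

/-- Thue–Morse set: nonnegative integers with an even number of binary 1's. -/
def A : Set ℕ := {n | Even ((Nat.digits 2 n).count 1)}

def B : Set ℕ := Aᶜ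

def Al (k : ℕ) : Set ℕ := A ∩ Set.Icc 0 (2 ^ k - 1)

def Bl (k : ℕ) : Set ℕ := B ∩ Set.Icc 0 (2 ^ k - 1)

open Function

namespace Nat

def popcount (n : ℕ) : ℕ := (digits 2 n).count 1

lemma popcount_eq_mod_two_add (n : ℕ) : popcount n = n % 2 + popcount (n / 2) := by
  rcases n.eq_zero_or_pos with rfl | hn
  · simp [popcount]
  · rcases n.mod_two_eq_zero_or_one with h | h <;>
      simp [popcount, digits_def' one_lt_two hn, h, add_comm]

lemma popcount_two_pow (k : ℕ) : popcount (2 ^ k) = 1 := by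
  have h := digits_append_zeroes_append_digits (b := 2) (k := k) (m := 1) (n := 0)
    one_lt_two one_pos
  simp only [digits_zero, List.length_nil, zero_add, mul_one] at h
  rw [popcount, ← h]
  simp [List.count_replicate]

lemma popcount_xor_mod_two (a b : ℕ) :
    popcount (a ^^^ b) % 2 = (popcount a + popcount b) % 2 := by
  induction a using Nat.strong_induction_on generalizing b with
  | _ a ih =>
    rcases a.eq_zero_or_pos with rfl | ha
    · simp [popcount]
    · have := ih (a / 2) (div_lt_self ha one_lt_two) (b / 2)
      rw [popcount_eq_mod_two_add (a ^^^ b), xor_div_two, xor_mod_two_eq,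
        popcount_eq_mod_two_add a, popcount_eq_mod_two_add b]
      omega

lemma even_popcount_xor_two_pow (a k : ℕ) :
    Even (popcount (a ^^^ 2 ^ k)) ↔ ¬Even (popcount a) := by
  have h := popcount_xor_mod_two a (2 ^ k)
  rw [popcount_two_pow] at h
  rw [even_iff, even_iff]
  omega

lemma xor_two_pow_of_testBit_eq_false {x k : ℕ} (h : x.testBit k = false) :
    x ^^^ 2 ^ k = x + 2 ^ k := by
  have hlow : x % 2 ^ k < 2 ^ k := mod_lt _ (Nat.two_pow_pos k)
  have hlow' : x % 2 ^ k + 2 ^ k < 2 ^ (k + 1) := by rw [pow_succ]; omega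
  have hx : x = 2 ^ (k + 1) * (x / 2 ^ (k + 1)) + x % 2 ^ k := by
    have hbit : x / 2 ^ k % 2 = 0 := by simpa [testBit_eq_decide_div_mod_eq] using h
    have hmod : x % 2 ^ (k + 1) = x % 2 ^ k := by rw [mod_pow_succ, hbit, mul_zero, add_zero]
    rw [← hmod, div_add_mod]
  have hor : x ^^^ 2 ^ k = x ||| 2 ^ k := by
    apply eq_of_testBit_eq
    intro i
    rcases eq_or_ne k i with rfl | hi
    · simp [h]
    · simp [hi]
  calc x ^^^ 2 ^ k = (2 ^ (k + 1) * (x / 2 ^ (k + 1)) ||| x % 2 ^ k) ||| 2 ^ k := by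
        rw [hor, ← two_pow_add_eq_or_of_lt (hlow.trans (by omega)), ← hx]
    _ = 2 ^ (k + 1) * (x / 2 ^ (k + 1)) + (x % 2 ^ k + 2 ^ k) := by
        rw [Nat.or_assoc, or_two_pow_eq_add_of_lt hlow, two_pow_add_eq_or_of_lt hlow']
    _ = x + 2 ^ k := by omega

lemma testBit_eq_of_log2_xor_lt {a b j : ℕ} (hj : (a ^^^ b).log2 < j) :
    a.testBit j = b.testBit j := by
  have h : (a ^^^ b).testBit j = false :=
    testBit_lt_two_pow (lt_log2_self.trans_le (Nat.pow_le_pow_right two_pos hj))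
  simpa using h

lemma testBit_log2_xor_of_lt {a b : ℕ} (h : a < b) :
    a.testBit (a ^^^ b).log2 = false ∧ b.testBit (a ^^^ b).log2 = true := by
  set k := (a ^^^ b).log2
  have hdiff : (a.testBit k ^^ b.testBit k) = true := by
    rw [← testBit_xor]
    exact testBit_log2 (by simpa using h.ne)
  have hnot : ¬(a.testBit k = true ∧ b.testBit k = false) := fun ⟨ha, hb⟩ =>
    (lt_of_testBit k hb ha fun j hj => (testBit_eq_of_log2_xor_lt hj).symm).not_gt h
  revert hdiff hnot
  cases a.testBit k <;> cases b.testBit k <;> simp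

end Nat

open Nat

def flipHighestDiffBit (p : ℕ × ℕ) : ℕ × ℕ :=
  (p.2 ^^^ 2 ^ (p.1 ^^^ p.2).log2, p.1 ^^^ 2 ^ (p.1 ^^^ p.2).log2)

lemma xor_flipHighestDiffBit (p : ℕ × ℕ) :
    (flipHighestDiffBit p).1 ^^^ (flipHighestDiffBit p).2 = p.1 ^^^ p.2 := by
  simp [flipHighestDiffBit, Nat.xor_comm, Nat.xor_left_comm]

lemma flipHighestDiffBit_involutive : Involutive flipHighestDiffBit := by
  intro p
  conv_lhs => rw [flipHighestDiffBit, xor_flipHighestDiffBit]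
  simp [flipHighestDiffBit]

lemma flipHighestDiffBit_lt {p : ℕ × ℕ} (h : p.1 < p.2) :
    (flipHighestDiffBit p).1 < (flipHighestDiffBit p).2 := by
  obtain ⟨h1, h2⟩ := testBit_log2_xor_of_lt h
  refine lt_of_testBit (p.1 ^^^ p.2).log2 (by simp [flipHighestDiffBit, h2])
    (by simp [flipHighestDiffBit, h1]) fun j hj => ?_
  simp [flipHighestDiffBit, hj.ne, testBit_eq_of_log2_xor_lt hj]

lemma flipHighestDiffBit_add {p : ℕ × ℕ} (h : p.1 < p.2) :
    (flipHighestDiffBit p).1 + (flipHighestDiffBit p).2 = p.1 + p.2 := by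
  obtain ⟨h1, h2⟩ := testBit_log2_xor_of_lt h
  have h2' : (p.2 ^^^ 2 ^ (p.1 ^^^ p.2).log2).testBit (p.1 ^^^ p.2).log2 = false := by
    simp [h2]
  have e1 := xor_two_pow_of_testBit_eq_false h1
  have e2 := xor_two_pow_of_testBit_eq_false h2'
  rw [Nat.xor_assoc, Nat.xor_self, Nat.xor_zero] at e2
  simp only [flipHighestDiffBit]
  omega

lemma flipHighestDiffBit_lt_two_pow {p : ℕ × ℕ} {l : ℕ} (hne : p.1 ≠ p.2)
    (h1 : p.1 < 2 ^ l) (h2 : p.2 < 2 ^ l) :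
    (flipHighestDiffBit p).1 < 2 ^ l ∧ (flipHighestDiffBit p).2 < 2 ^ l := by
  have hxor : p.1 ^^^ p.2 ≠ 0 := by simpa using hne
  have hd : 2 ^ (p.1 ^^^ p.2).log2 < 2 ^ l :=
    Nat.pow_lt_pow_right one_lt_two ((log2_lt hxor).mpr (xor_lt_two_pow h1 h2))
  exact ⟨xor_lt_two_pow h2 hd, xor_lt_two_pow h1 hd⟩

def sumPairs (S : Set ℕ) (n : ℕ) : Set (ℕ × ℕ) :=
  {p | p.1 ∈ S ∧ p.2 ∈ S ∧ p.1 < p.2 ∧ p.1 + p.2 = n}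

lemma R_eq_ncard_sumPairs (S : Set ℕ) (n : ℕ) : R S n = (sumPairs S n).ncard := rfl

lemma mapsTo_flipHighestDiffBit_sumPairs {S T : Set ℕ} (hST : ∀ x k, x ∈ S → x ^^^ 2 ^ k ∈ T)
    (l n : ℕ) :
    MapsTo flipHighestDiffBit (sumPairs (S ∩ Icc 0 (2 ^ l - 1)) n)
      (sumPairs (T ∩ Icc 0 (2 ^ l - 1)) n) := by
  have mem_Icc_iff : ∀ x, x ∈ Icc 0 (2 ^ l - 1) ↔ x < 2 ^ l := fun x => by
    have := Nat.two_pow_pos l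
    simp only [mem_Icc, zero_le, true_and]
    omega
  simp only [MapsTo, sumPairs, mem_ofPred_eq, mem_inter_iff, mem_Icc_iff]
  rintro p ⟨⟨h1S, h1l⟩, ⟨h2S, h2l⟩, hlt, rfl⟩
  obtain ⟨hb1, hb2⟩ := flipHighestDiffBit_lt_two_pow hlt.ne h1l h2l
  exact ⟨⟨hST _ _ h2S, hb1⟩, ⟨hST _ _ h1S, hb2⟩, flipHighestDiffBit_lt hlt,
    flipHighestDiffBit_add hlt⟩

theorem stmt0_general (l : ℕ) (n : ℕ) : R (Al l) n = R (Bl l) n := by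
  have hAB : ∀ x k, x ∈ A → x ^^^ 2 ^ k ∈ B := fun x k hx =>
    (even_popcount_xor_two_pow x k).not.mpr (not_not_intro hx)
  have hBA : ∀ x k, x ∈ B → x ^^^ 2 ^ k ∈ A := fun x k hx =>
    (even_popcount_xor_two_pow x k).mpr hx
  have hinv := flipHighestDiffBit_involutive
  rw [R_eq_ncard_sumPairs, R_eq_ncard_sumPairs]
  exact (InvOn.bijOn ⟨fun p _ => hinv p, fun p _ => hinv p⟩
    (mapsTo_flipHighestDiffBit_sumPairs hAB l n)
    (mapsTo_flipHighestDiffBit_sumPairs hBA l n)).ncard_eq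

theorem stmt0 (l : ℕ) (hl : 0 < l) (n : ℕ) : R (Al l) n = R (Bl l) n :=
  stmt0_general l n
end

section
/- Let m ≥ 2 and let 0 < r_1 < ⋯ < r_s ≤ m be integers. There exists at most one pair of sets (C, D) such that C ∪ D = [0, m], 0 ∈ C, C ∩ D = {r_1, …, r_s}, and R_C(n) = R_D(n) for every n ≤ m. -/
open Set
open scoped Classical

private lemma Rset_finite (S : Set ℕ) (n : ℕ) :
    {p : ℕ × ℕ | p.1 ∈ S ∧ p.2 ∈ S ∧ p.1 < p.2 ∧ p.1 + p.2 = n}.Finite := by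
  apply Set.Finite.subset (Set.finite_Icc ((0:ℕ),(0:ℕ)) (n,n))
  rintro ⟨x,y⟩ ⟨_,_,hlt,hsum⟩
  simp only [Set.mem_Icc, Prod.mk_le_mk]
  omega

private lemma R_split (S : Set ℕ) (n : ℕ) (hn : 0 < n) :
    R S n = R (S ∩ Set.Icc 1 (n-1)) n + (if 0 ∈ S ∧ n ∈ S then 1 else 0) := by
  set T := S ∩ Set.Icc 1 (n-1) with hT
  by_cases h : 0 ∈ S ∧ n ∈ S
  · rw [if_pos h]
    have hset : {p : ℕ × ℕ | p.1 ∈ S ∧ p.2 ∈ S ∧ p.1 < p.2 ∧ p.1 + p.2 = n}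
        = insert ((0:ℕ), n) {p : ℕ × ℕ | p.1 ∈ T ∧ p.2 ∈ T ∧ p.1 < p.2 ∧ p.1 + p.2 = n} := by
      ext ⟨x,y⟩
      simp only [hT, Set.mem_setOf_eq, Set.mem_insert_iff, Set.mem_inter_iff, Set.mem_Icc,
        Prod.mk.injEq]
      constructor
      · rintro ⟨hx, hy, hlt, hsum⟩
        rcases Nat.eq_zero_or_pos x with hx0 | hx1
        · left; omega
        · right; exact ⟨⟨hx, by omega, by omega⟩, ⟨hy, by omega, by omega⟩, hlt, hsum⟩
      · rintro (⟨hx0, hyn⟩ | ⟨⟨hx,_,_⟩,⟨hy,_,_⟩,hlt,hsum⟩)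
        · subst hx0; subst hyn; exact ⟨h.1, h.2, hn, by omega⟩
        · exact ⟨hx, hy, hlt, hsum⟩
    have hnotmem : ((0:ℕ), n) ∉ {p : ℕ × ℕ | p.1 ∈ T ∧ p.2 ∈ T ∧ p.1 < p.2 ∧ p.1 + p.2 = n} := by
      rintro ⟨⟨_, hx1, _⟩, _, _, _⟩
      exact absurd hx1 (by omega)
    rw [R, R, hset, Set.ncard_insert_of_notMem hnotmem (Rset_finite T n)]
  · rw [if_neg h]
    have hset : {p : ℕ × ℕ | p.1 ∈ S ∧ p.2 ∈ S ∧ p.1 < p.2 ∧ p.1 + p.2 = n}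
        = {p : ℕ × ℕ | p.1 ∈ T ∧ p.2 ∈ T ∧ p.1 < p.2 ∧ p.1 + p.2 = n} := by
      ext ⟨x,y⟩
      simp only [hT, Set.mem_setOf_eq, Set.mem_inter_iff, Set.mem_Icc]
      constructor
      · rintro ⟨hx, hy, hlt, hsum⟩
        rcases Nat.eq_zero_or_pos x with hx0 | hx1
        · exfalso
          have hyn : y = n := by omega
          exact h ⟨hx0 ▸ hx, hyn ▸ hy⟩
        · exact ⟨⟨hx, by omega, by omega⟩, ⟨hy, by omega, by omega⟩, hlt, hsum⟩
      · rintro ⟨⟨hx,_,_⟩,⟨hy,_,_⟩,hlt,hsum⟩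
        exact ⟨hx, hy, hlt, hsum⟩
    rw [R, R, hset]; omega

theorem stmt1 (m : ℕ) (hm : 2 ≤ m) (Rs : Set ℕ) (hRs : Rs ⊆ Set.Icc 1 m)
    (C D C' D' : Set ℕ)
    (h1 : C ∪ D = Set.Icc 0 m) (h2 : (0 : ℕ) ∈ C) (h3 : C ∩ D = Rs)
    (h4 : ∀ n ≤ m, R C n = R D n)
    (h1' : C' ∪ D' = Set.Icc 0 m) (h2' : (0 : ℕ) ∈ C') (h3' : C' ∩ D' = Rs)
    (h4' : ∀ n ≤ m, R C' n = R D' n) :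
    C = C' ∧ D = D' := by
  -- 0 ∉ D, 0 ∉ D'
  have h0D : (0:ℕ) ∉ D := fun h0 => by
    have : (0:ℕ) ∈ Rs := h3 ▸ ⟨h2, h0⟩
    have := hRs this; simp [Set.mem_Icc] at this
  have h0D' : (0:ℕ) ∉ D' := fun h0 => by
    have : (0:ℕ) ∈ Rs := h3' ▸ ⟨h2', h0⟩
    have := hRs this; simp [Set.mem_Icc] at this
  -- membership in D determined by C
  have memD : ∀ j ≤ m, (j ∈ D ↔ (j ∈ Rs ∨ j ∉ C)) := by
    intro j hj
    constructor
    · intro hjD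
      by_cases hjC : j ∈ C
      · left; exact h3 ▸ ⟨hjC, hjD⟩
      · right; exact hjC
    · rintro (hjR | hjC)
      · exact (h3 ▸ hjR : j ∈ C ∩ D).2
      · have : j ∈ C ∪ D := by rw [h1]; simp [Set.mem_Icc, hj]
        rcases this with h | h
        · exact absurd h hjC
        · exact h
  have memD' : ∀ j ≤ m, (j ∈ D' ↔ (j ∈ Rs ∨ j ∉ C')) := by
    intro j hj
    constructor
    · intro hjD
      by_cases hjC : j ∈ C'
      · left; exact h3' ▸ ⟨hjC, hjD⟩
      · right; exact hjC
    · rintro (hjR | hjC)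
      · exact (h3' ▸ hjR : j ∈ C' ∩ D').2
      · have : j ∈ C' ∪ D' := by rw [h1']; simp [Set.mem_Icc, hj]
        rcases this with h | h
        · exact absurd h hjC
        · exact h
  -- strong induction: membership in C agrees
  have key : ∀ k, k ≤ m → (k ∈ C ↔ k ∈ C') := by
    intro k
    induction k using Nat.strong_induction_on with
    | _ k ih =>
      intro hk
      rcases Nat.eq_zero_or_pos k with hk0 | hk1
      · subst hk0; simp [h2, h2']
      by_cases hkR : k ∈ Rs
      · have : k ∈ C := (h3 ▸ hkR : k ∈ C ∩ D).1
        have : k ∈ C' := (h3' ▸ hkR : k ∈ C' ∩ D').1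
        simp_all
      -- restricted sets agree
      have hCeq : C ∩ Set.Icc 1 (k-1) = C' ∩ Set.Icc 1 (k-1) := by
        ext j
        simp only [Set.mem_inter_iff, Set.mem_Icc]
        constructor
        · rintro ⟨hj, h1j, h2j⟩
          exact ⟨(ih j (by omega) (by omega)).1 hj, h1j, h2j⟩
        · rintro ⟨hj, h1j, h2j⟩
          exact ⟨(ih j (by omega) (by omega)).2 hj, h1j, h2j⟩
      have hDeq : D ∩ Set.Icc 1 (k-1) = D' ∩ Set.Icc 1 (k-1) := by
        ext j
        simp only [Set.mem_inter_iff, Set.mem_Icc]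
        constructor
        · rintro ⟨hj, h1j, h2j⟩
          refine ⟨(memD' j (by omega)).2 ?_, h1j, h2j⟩
          rcases (memD j (by omega)).1 hj with h | h
          · exact Or.inl h
          · exact Or.inr (fun hc => h ((ih j (by omega) (by omega)).2 hc))
        · rintro ⟨hj, h1j, h2j⟩
          refine ⟨(memD j (by omega)).2 ?_, h1j, h2j⟩
          rcases (memD' j (by omega)).1 hj with h | h
          · exact Or.inl h
          · exact Or.inr (fun hc => h ((ih j (by omega) (by omega)).1 hc))
      have e1 := h4 k hk
      have e1' := h4' k hk
      rw [R_split C k hk1, R_split D k hk1] at e1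
      rw [R_split C' k hk1, R_split D' k hk1] at e1'
      rw [hCeq, hDeq] at e1
      have hDif : (if 0 ∈ D ∧ k ∈ D then 1 else 0) = 0 := by simp [h0D]
      have hDif' : (if 0 ∈ D' ∧ k ∈ D' then 1 else 0) = 0 := by simp [h0D']
      rw [hDif] at e1
      rw [hDif'] at e1'
      have hCif : (if 0 ∈ C ∧ k ∈ C then 1 else 0) = (if 0 ∈ C' ∧ k ∈ C' then 1 else 0) := by
        omega
      simp only [h2, true_and, h2', true_and] at hCif
      by_cases hc : k ∈ C <;> by_cases hc' : k ∈ C' <;> simp [hc, hc'] at hCif ⊢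
  -- conclude
  have hCsub : C ⊆ Set.Icc 0 m := fun x hx => h1 ▸ Or.inl hx
  have hCsub' : C' ⊆ Set.Icc 0 m := fun x hx => h1' ▸ Or.inl hx
  have hDsub : D ⊆ Set.Icc 0 m := fun x hx => h1 ▸ Or.inr hx
  have hDsub' : D' ⊆ Set.Icc 0 m := fun x hx => h1' ▸ Or.inr hx
  have hCC : C = C' := by
    ext x
    constructor
    · intro hx
      have := hCsub hx; simp [Set.mem_Icc] at this
      exact (key x this).1 hx
    · intro hx
      have := hCsub' hx; simp [Set.mem_Icc] at this
      exact (key x this).2 hx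
  refine ⟨hCC, ?_⟩
  ext x
  constructor
  · intro hx
    have hxm := hDsub hx; simp [Set.mem_Icc] at hxm
    refine (memD' x hxm).2 ?_
    rcases (memD x hxm).1 hx with h | h
    · exact Or.inl h
    · exact Or.inr (hCC ▸ h)
  · intro hx
    have hxm := hDsub' hx; simp [Set.mem_Icc] at hxm
    refine (memD x hxm).2 ?_
    rcases (memD' x hxm).1 hx with h | h
    · exact Or.inl h
    · exact Or.inr (hCC ▸ h)
end

section
/- If C = A ∩ [0, m] and D = B ∩ [0, m], where m is a positive integer not of the form 2^l − 1, then there exists an integer n with m < n < 2m such that R_C(n) ≠ R_D(n). -/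
open Set

/-! ### Auxiliary: the ±1 Thue–Morse sequence -/

def eps (n : ℕ) : ℤ := if Even ((Nat.digits 2 n).count 1) then 1 else -1

lemma eps_zero : eps 0 = 1 := by simp [eps]

lemma count_double (n : ℕ) : ((Nat.digits 2 (2*n)).count 1) = (Nat.digits 2 n).count 1 := by
  rcases Nat.eq_zero_or_pos n with h | h
  · simp [h]
  · rw [Nat.digits_def' (by norm_num : 1 < 2) (by omega)]
    simp [Nat.mul_div_cancel_left, Nat.mul_mod_right]

lemma count_double_add_one (n : ℕ) :
    ((Nat.digits 2 (2*n+1)).count 1) = (Nat.digits 2 n).count 1 + 1 := by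
  rw [Nat.digits_def' (by norm_num : 1 < 2) (by omega)]
  have h1 : (2*n+1) % 2 = 1 := by omega
  have h2 : (2*n+1) / 2 = n := by omega
  simp [h1, h2]

lemma eps_double (n : ℕ) : eps (2*n) = eps n := by
  simp [eps, count_double]

lemma eps_double_add_one (n : ℕ) : eps (2*n+1) = -eps n := by
  unfold eps
  rw [count_double_add_one]
  by_cases h : Even ((Nat.digits 2 n).count 1) <;>
    simp [h, Nat.even_add_one]

lemma eps_cases (n : ℕ) : eps n = 1 ∨ eps n = -1 := by
  unfold eps; split <;> simp

lemma eps_ne_zero (n : ℕ) : eps n ≠ 0 := by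
  rcases eps_cases n with h | h <;> omega

lemma eps_one : eps 1 = -1 := by
  have := eps_double_add_one 0; rw [eps_zero] at this; simpa using this

noncomputable def S (M : ℕ) : ℤ := ∑ i ∈ Finset.range M, eps i

lemma S_succ (k : ℕ) : S (k+1) = S k + eps k := Finset.sum_range_succ _ _

lemma S_even (k : ℕ) : S (2*k) = 0 := by
  induction k with
  | zero => simp [S]
  | succ k ih =>
    have : 2*(k+1) = (2*k)+1+1 := by ring
    rw [this, S, Finset.sum_range_succ, Finset.sum_range_succ, ← S, ih,
      eps_double_add_one, eps_double]
    ring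

lemma S_odd (k : ℕ) : S (2*k+1) = eps k := by
  rw [S, Finset.sum_range_succ, ← S, S_even, eps_double]; ring

/-! ### If eps anti-matches on a block starting at `M`, then `M` is a power of 2 -/

lemma pow_of_anti : ∀ M, 2 ≤ M → (∀ j, j ≤ M - 2 → eps (M + j) = -eps j) →
    ∃ a, M = 2^a := by
  intro M
  induction M using Nat.strong_induction_on with
  | _ M ih =>
    intro hM H
    rcases Nat.even_or_odd M with ⟨M', hM'⟩ | ⟨M', hM'⟩
    · -- M even, M = M' + M'
      have hMe : M = 2 * M' := by omega
      have h2 : ∀ j', j' ≤ M' - 1 → eps (M' + j') = -eps j' := by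
        intro j' hj'
        have hj2 : 2*j' ≤ M - 2 := by omega
        have := H (2*j') hj2
        rw [show M + 2*j' = 2*(M'+j') by omega, eps_double, eps_double] at this
        exact this
      by_cases hM'1 : M' = 1
      · exact ⟨1, by omega⟩
      · obtain ⟨a, ha⟩ := ih M' (by omega) (by omega) (fun j hj => h2 j (by omega))
        exact ⟨a+1, by rw [pow_succ]; omega⟩
    · -- M odd, M = 2*M'+1
      exfalso
      set K := M' with hK
      have hM3 : M = 2*K+1 := by omega
      have h0 := H 0 (by omega)
      rw [eps_zero] at h0
      simp only [Nat.add_zero] at h0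
      by_cases hK1 : K = 1
      · have : eps 3 = 1 := by
          have := eps_double_add_one 1; rw [eps_one] at this; simpa using this
        rw [hM3, hK1] at h0; norm_num at h0; omega
      · have hK2 : 2 ≤ K := by omega
        have hA : ∀ i, i ≤ K-1 → eps (K + i) = eps i := by
          intro i hi
          have := H (2*i) (by omega)
          rw [show M + 2*i = 2*(K+i)+1 by omega, eps_double_add_one, eps_double] at this
          have h := eps_ne_zero i
          omega
        have hB : ∀ i, i ≤ K-1 → eps (K + 1 + i) = eps i := by
          intro i hi
          have := H (2*i+1) (by omega)
          rw [show M + (2*i+1) = 2*(K+1+i) by omega, eps_double,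
            eps_double_add_one] at this
          omega
        rcases Nat.even_or_odd K with ⟨v, hv⟩ | ⟨v, hv⟩
        · have e1 := hA 0 (by omega)
          have e2 := hB 0 (by omega)
          rw [eps_zero] at e1 e2
          rw [show K + 0 = 2*v by omega, eps_double] at e1
          rw [show K + 1 + 0 = 2*v+1 by omega, eps_double_add_one] at e2
          omega
        · have e1 := hA 1 (by omega)
          have e2 := hB 1 (by omega)
          rw [show K + 1 = 2*(v+1) by omega, eps_double] at e1
          rw [show K + 1 + 1 = 2*(v+1)+1 by omega, eps_double_add_one] at e2
          rw [eps_one] at e1 e2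
          omega

/-! ### Counting identity -/

lemma R_eq_card (m n : ℕ) (h1 : m < n) (h2 : n < 2*m) (T : Set ℕ) (p : ℕ → Prop)
    [DecidablePred p] (hT : ∀ x, x ∈ T ↔ p x) :
    R (T ∩ Set.Icc 0 m) n =
      ((Finset.Icc (n-m) ((n-1)/2)).filter (fun i => p i ∧ p (n-i))).card := by
  have inj : Function.Injective (fun i : ℕ => (i, n-i)) := by
    intro a b hab
    exact congrArg Prod.fst hab
  rw [R]
  have hset : {q : ℕ × ℕ | q.1 ∈ T ∩ Set.Icc 0 m ∧ q.2 ∈ T ∩ Set.Icc 0 m ∧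
      q.1 < q.2 ∧ q.1 + q.2 = n} =
      ↑(((Finset.Icc (n-m) ((n-1)/2)).filter (fun i => p i ∧ p (n-i))).image
        (fun i => (i, n-i))) := by
    ext ⟨x, y⟩
    simp only [Set.mem_setOf_eq, Finset.coe_image, Set.mem_image, Finset.mem_coe,
      Finset.mem_filter, Finset.mem_Icc, Set.mem_inter_iff, Set.mem_Icc, hT,
      Prod.mk.injEq]
    constructor
    · rintro ⟨⟨hx, _, hxm⟩, ⟨hy, _, hym⟩, hlt, hsum⟩
      refine ⟨x, ⟨⟨by omega, by omega⟩, hx, ?_⟩, rfl, by omega⟩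
      rw [show n - x = y by omega]; exact hy
    · rintro ⟨i, ⟨⟨hi1, hi2⟩, hpi, hpni⟩, hx, hy⟩
      subst hx; subst hy
      exact ⟨⟨hpi, by omega, by omega⟩, ⟨hpni, by omega, by omega⟩, by omega, by omega⟩
  rw [hset, Set.ncard_coe_finset, Finset.card_image_of_injective _ inj]

lemma R_int (m n : ℕ) (h1 : m < n) (h2 : n < 2*m) (T : Set ℕ) (p : ℕ → Prop)
    [DecidablePred p] (hT : ∀ x, x ∈ T ↔ p x) :
    (R (T ∩ Set.Icc 0 m) n : ℤ) =
      ∑ i ∈ Finset.Icc (n-m) ((n-1)/2), (if p i ∧ p (n-i) then (1:ℤ) else 0) := by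
  rw [R_eq_card m n h1 h2 T p hT, Finset.card_filter]
  push_cast
  rfl

lemma key (m n : ℕ) (h1 : m < n) (h2 : n < 2*m) :
    2 * ((R (A ∩ Set.Icc 0 m) n : ℤ) - (R (B ∩ Set.Icc 0 m) n : ℤ)) =
      (S ((n-1)/2 + 1) - S (n-m)) + (S (m+1) - S (n - (n-1)/2)) := by
  rw [R_int m n h1 h2 A (fun k => Even ((Nat.digits 2 k).count 1)) (fun x => Iff.rfl),
      R_int m n h1 h2 B (fun k => ¬ Even ((Nat.digits 2 k).count 1)) (fun x => Iff.rfl)]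
  rw [← Finset.sum_sub_distrib, Finset.mul_sum]
  have step : ∀ i ∈ Finset.Icc (n-m) ((n-1)/2),
      2 * ((if Even ((Nat.digits 2 i).count 1) ∧ Even ((Nat.digits 2 (n-i)).count 1)
            then (1:ℤ) else 0) -
           (if ¬Even ((Nat.digits 2 i).count 1) ∧ ¬Even ((Nat.digits 2 (n-i)).count 1)
            then (1:ℤ) else 0)) = eps i + eps (n-i) := by
    intro i _
    by_cases hx : Even ((Nat.digits 2 i).count 1) <;>
      by_cases hy : Even ((Nat.digits 2 (n-i)).count 1) <;>
      simp [eps, hx, hy]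
  rw [Finset.sum_congr rfl step, Finset.sum_add_distrib]
  have refl2 : ∑ i ∈ Finset.Icc (n-m) ((n-1)/2), eps (n-i)
      = ∑ j ∈ Finset.Icc (n-(n-1)/2) m, eps j := by
    apply Finset.sum_nbij' (i := fun x => n - x) (j := fun x => n - x)
    · intro a ha; simp only [Finset.mem_Icc] at *; omega
    · intro a ha; simp only [Finset.mem_Icc] at *; omega
    · intro a ha; simp only [Finset.mem_Icc] at *; omega
    · intro a ha; simp only [Finset.mem_Icc] at *; omega
    · intro a ha; rfl
  rw [refl2]
  have sum_Icc_eps : ∀ a b : ℕ, a ≤ b+1 →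
      ∑ i ∈ Finset.Icc a b, eps i = S (b+1) - S a := by
    intro a b h
    rw [← Finset.Ico_add_one_right_eq_Icc, Finset.sum_Ico_eq_sub _ h]
    rfl
  rw [sum_Icc_eps _ _ (by omega), sum_Icc_eps _ _ (by omega)]

theorem stmt6 (m : ℕ) (hm : 0 < m) (h : ∀ l : ℕ, m ≠ 2 ^ l - 1) :
    ∃ n : ℕ, m < n ∧ n < 2 * m ∧
      R (A ∩ Set.Icc 0 m) n ≠ R (B ∩ Set.Icc 0 m) n := by
  rcases Nat.even_or_odd m with ⟨m', hmev⟩ | ⟨M', hmod⟩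
  · -- m even, m = m' + m'
    have hm' : 1 ≤ m' := by omega
    set i₀ : ℕ := if eps m' = 1 then 1 else 0 with hi₀
    have hi0m : 2*i₀ + 1 < m := by
      by_cases hc : eps m' = 1
      · have hne : m' ≠ 1 := by
          intro h1; rw [h1, eps_one] at hc; omega
        simp only [hi₀, if_pos hc]; omega
      · simp only [hi₀, if_neg hc]; omega
    refine ⟨m + 2*i₀ + 1, by omega, by omega, ?_⟩
    intro heq
    have hkey := key m (m + 2*i₀ + 1) (by omega) (by omega)
    rw [show (m + 2*i₀ + 1 - 1)/2 + 1 = m' + i₀ + 1 by omega,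
        show m + 2*i₀ + 1 - (m + 2*i₀ + 1 - 1)/2 = m' + i₀ + 1 by omega,
        show m + 2*i₀ + 1 - m = 2*i₀ + 1 by omega,
        show m + 1 = 2*m' + 1 by omega, S_odd, S_odd] at hkey
    have hcast : (R (A ∩ Set.Icc 0 m) (m + 2*i₀ + 1) : ℤ)
        = (R (B ∩ Set.Icc 0 m) (m + 2*i₀ + 1) : ℤ) := by exact_mod_cast heq
    rw [hcast, sub_self, mul_zero] at hkey
    have hval : eps m' = eps i₀ := by linarith
    by_cases hc : eps m' = 1
    · rw [hi₀, if_pos hc, eps_one] at hval; omega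
    · rcases eps_cases m' with h1 | h1
      · exact hc h1
      · rw [hi₀, if_neg hc, eps_zero] at hval; omega
  · -- m odd, m = 2*M' + 1
    have hm1 : m ≠ 1 := by
      have := h 1; omega
    set M : ℕ := M' + 1 with hM
    have hMm : m = 2*M - 1 := by omega
    have hM2 : 2 ≤ M := by omega
    have hnotpow : ¬ ∃ a, M = 2^a := by
      rintro ⟨a, ha⟩
      exact h (a+1) (by rw [pow_succ]; omega)
    obtain ⟨j, hj, hje⟩ : ∃ j, j ≤ M - 2 ∧ eps (M+j) = eps j := by
      by_contra hcon
      push_neg at hcon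
      refine hnotpow (pow_of_anti M hM2 ?_)
      intro j hj
      have hne := hcon j hj
      rcases eps_cases (M+j) with h1 | h1 <;> rcases eps_cases j with h2 | h2 <;> omega
    refine ⟨m + 2*j + 1, by omega, by omega, ?_⟩
    intro heq
    have hkey := key m (m + 2*j + 1) (by omega) (by omega)
    rw [show (m + 2*j + 1 - 1)/2 + 1 = M + j by omega,
        show m + 2*j + 1 - (m + 2*j + 1 - 1)/2 = M + j + 1 by omega,
        show m + 2*j + 1 - m = 2*j + 1 by omega,
        show m + 1 = 2*M by omega, S_even, S_odd, S_succ] at hkey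
    have hcast : (R (A ∩ Set.Icc 0 m) (m + 2*j + 1) : ℤ)
        = (R (B ∩ Set.Icc 0 m) (m + 2*j + 1) : ℤ) := by exact_mod_cast heq
    rw [hcast, sub_self, mul_zero] at hkey
    have := eps_ne_zero j
    rw [hje] at hkey
    omega
end

section
/- Let l ≥ 1, C = A_{2l+1} ∪ (2^{2l+1} − 2 + B_{2l+1}) ∪ (2^{2l+2} − 2 + (B_{2l+1} ∩ [0, 2^{2l+1} − 3])) and F = B_{2l+1} ∪ (2^{2l+1} − 2 + A_{2l+1}) ∪ (2^{2l+2} − 2 + (A_{2l+1} ∩ [0, 2^{2l+1} − 3])). Then R_C(n) = R_F(n) for every n with 0 ≤ n ≤ 3·2^{2l+1} − 5. -/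
open Set

lemma count_one_pow_add : ∀ k : ℕ, ∀ y : ℕ, y < 2^k →
    (Nat.digits 2 (2^k + y)).count 1 = (Nat.digits 2 y).count 1 + 1 := by
  intro k
  induction k with
  | zero =>
    intro y hy
    interval_cases y
    simp [Nat.digits_def' (by norm_num : (1:ℕ) < 2)]
  | succ k ih =>
    intro y hy
    have h1 : 0 < 2^(k+1) + y := by positivity
    rw [Nat.digits_def' (by norm_num : (1:ℕ) < 2) h1]
    have hmod : (2^(k+1) + y) % 2 = y % 2 := by
      omega
    have hdiv : (2^(k+1) + y) / 2 = 2^k + y/2 := by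
      omega
    rw [hmod, hdiv]
    have hy2 : y / 2 < 2^k := by
      have : 2^(k+1) = 2*2^k := by ring
      omega
    rw [List.count_cons, ih _ hy2]
    rcases Nat.eq_zero_or_pos y with hy0 | hy0
    · subst hy0; simp
    · rw [Nat.digits_def' (by norm_num : (1:ℕ) < 2) hy0, List.count_cons]
      ring

lemma count_one_pow_sub_one : ∀ k : ℕ, (Nat.digits 2 (2^k - 1)).count 1 = k := by
  intro k
  induction k with
  | zero => simp
  | succ k ih =>
    have h1 : 0 < 2^(k+1) - 1 := by
      have : (2:ℕ) ≤ 2^(k+1) := Nat.one_lt_two_pow (by omega)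
      omega
    have h2 : 2^(k+1) - 1 = 2*(2^k - 1) + 1 := by
      have : (1:ℕ) ≤ 2^k := Nat.one_le_two_pow
      have : 2^(k+1) = 2*2^k := by ring
      omega
    rw [Nat.digits_def' (by norm_num : (1:ℕ) < 2) h1, h2]
    have : (2 * (2 ^ k - 1) + 1) % 2 = 1 := by omega
    rw [Nat.mul_add_div (by norm_num), this]
    simp [ih]


lemma count_one_two_mul (m : ℕ) (hm : 0 < m) :
    (Nat.digits 2 (2*m)).count 1 = (Nat.digits 2 m).count 1 := by
  rw [Nat.digits_def' (by norm_num : (1:ℕ) < 2) (by omega)]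
  have h1 : 2*m % 2 = 0 := by omega
  have h2 : 2*m / 2 = m := by omega
  rw [h1, h2, List.count_cons]
  simp

def Mset (S T : Set ℕ) (n : ℕ) : Set (ℕ × ℕ) :=
  {p | p.1 ∈ S ∧ p.2 ∈ T ∧ p.1 + p.2 = n}

noncomputable def M (S T : Set ℕ) (n : ℕ) : ℕ := (Mset S T n).ncard

def Pset (S : Set ℕ) (n : ℕ) : Set (ℕ × ℕ) :=
  {p | p.1 ∈ S ∧ p.2 ∈ S ∧ p.1 < p.2 ∧ p.1 + p.2 = n}

lemma R_eq (S : Set ℕ) (n : ℕ) : R S n = (Pset S n).ncard := rfl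

lemma Pset_finite (S : Set ℕ) (n : ℕ) : (Pset S n).Finite := by
  apply Set.Finite.subset (Set.finite_Iic (n, n))
  rintro ⟨a, b⟩ ⟨_, _, _, h⟩
  constructor <;> simp <;> omega

lemma Mset_finite (S T : Set ℕ) (n : ℕ) : (Mset S T n).Finite := by
  apply Set.Finite.subset (Set.finite_Iic (n, n))
  rintro ⟨a, b⟩ ⟨_, _, h⟩
  constructor <;> simp <;> omega

lemma M_comm (S T : Set ℕ) (n : ℕ) : M S T n = M T S n := by
  unfold M
  have : Mset T S n = Prod.swap '' Mset S T n := by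
    ext ⟨a, b⟩
    constructor
    · rintro ⟨h1, h2, h3⟩; exact ⟨(b, a), ⟨h2, h1, by omega⟩, rfl⟩
    · rintro ⟨⟨c, d⟩, ⟨h1, h2, h3⟩, h⟩
      cases h
      exact ⟨h2, h1, by omega⟩
  rw [this, Set.ncard_image_of_injective _ Prod.swap_injective]

lemma M_union_left {S S' : Set ℕ} (T : Set ℕ) (n : ℕ) (h : Disjoint S S') :
    M (S ∪ S') T n = M S T n + M S' T n := by
  unfold M
  have he : Mset (S ∪ S') T n = Mset S T n ∪ Mset S' T n := by
    ext ⟨a, b⟩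
    simp only [Mset, Set.mem_setOf_eq, Set.mem_union]
    tauto
  rw [he, Set.ncard_union_eq _ (Mset_finite _ _ _) (Mset_finite _ _ _)]
  rw [Set.disjoint_left]
  rintro ⟨a, b⟩ ⟨h1, _, _⟩ ⟨h1', _, _⟩
  exact Set.disjoint_left.mp h h1 h1'

lemma R_union {S T : Set ℕ} (n : ℕ) (h : Disjoint S T) :
    R (S ∪ T) n = R S n + R T n + M S T n := by
  rw [R_eq, R_eq, R_eq]
  classical
  set Mix1 : Set (ℕ × ℕ) := {p | p.1 ∈ S ∧ p.2 ∈ T ∧ p.1 < p.2 ∧ p.1 + p.2 = n} with hM1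
  set Mix2 : Set (ℕ × ℕ) := {p | p.1 ∈ T ∧ p.2 ∈ S ∧ p.1 < p.2 ∧ p.1 + p.2 = n} with hM2
  have hsplit : Pset (S ∪ T) n = (Pset S n ∪ Pset T n) ∪ (Mix1 ∪ Mix2) := by
    ext ⟨a, b⟩
    simp only [Pset, hM1, hM2, Set.mem_setOf_eq, Set.mem_union]
    tauto
  have hfin1 : Mix1.Finite := by
    apply Set.Finite.subset (Set.finite_Iic (n, n))
    rintro ⟨a, b⟩ ⟨_, _, _, h⟩
    constructor <;> simp <;> omega
  have hfin2 : Mix2.Finite := by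
    apply Set.Finite.subset (Set.finite_Iic (n, n))
    rintro ⟨a, b⟩ ⟨_, _, _, h⟩
    constructor <;> simp <;> omega
  have hd := Set.disjoint_left.mp h
  have hd' : ∀ x, x ∈ T → x ∉ S := fun x hx hx' => hd hx' hx
  rw [hsplit]
  rw [Set.ncard_union_eq ?d1 ((Pset_finite _ _).union (Pset_finite _ _)) (hfin1.union hfin2)]
  rw [Set.ncard_union_eq ?d2 (Pset_finite _ _) (Pset_finite _ _)]
  rw [Set.ncard_union_eq ?d3 hfin1 hfin2]
  case d1 =>
    rw [Set.disjoint_left]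
    rintro ⟨a, b⟩ hab hab'
    rcases hab with ⟨h1, h2, _, _⟩ | ⟨h1, h2, _, _⟩ <;>
      rcases hab' with ⟨h1', h2', _, _⟩ | ⟨h1', h2', _, _⟩ <;>
      first
        | exact hd h1 h1'
        | exact hd h2 h2'
        | exact hd h1' h1
        | exact hd h2' h2
  case d2 =>
    rw [Set.disjoint_left]
    rintro ⟨a, b⟩ ⟨h1, _, _, _⟩ ⟨h1', _, _, _⟩
    exact hd h1 h1'
  case d3 =>
    rw [Set.disjoint_left]
    rintro ⟨a, b⟩ ⟨h1, _, _, _⟩ ⟨h1', _, _, _⟩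
    exact hd h1 h1'
  -- now show Mix1.ncard + Mix2.ncard = M S T n
  have hmix : Mset S T n = Mix1 ∪ (Prod.swap '' Mix2) := by
    ext ⟨a, b⟩
    simp only [Mset, hM1, hM2, Set.mem_setOf_eq, Set.mem_union, Set.mem_image]
    constructor
    · rintro ⟨h1, h2, h3⟩
      rcases lt_trichotomy a b with hlt | heq | hgt
      · left; exact ⟨h1, h2, hlt, h3⟩
      · exact absurd (heq ▸ h1) (hd' b h2)
      · right; exact ⟨(b, a), ⟨h2, h1, hgt, by omega⟩, rfl⟩
    · rintro (⟨h1, h2, _, h3⟩ | ⟨⟨c, d⟩, ⟨h1, h2, _, h3⟩, he⟩)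
      · exact ⟨h1, h2, h3⟩
      · cases he; exact ⟨h2, h1, by omega⟩
  have : M S T n = Mix1.ncard + Mix2.ncard := by
    unfold M
    rw [hmix, Set.ncard_union_eq ?d4 hfin1 (hfin2.image _),
      Set.ncard_image_of_injective _ Prod.swap_injective]
    case d4 =>
      rw [Set.disjoint_left]
      rintro ⟨a, b⟩ ⟨_, _, hlt, _⟩ ⟨⟨c, d⟩, ⟨_, _, hlt', _⟩, he⟩
      cases he; omega
  omega

lemma R_shift (S : Set ℕ) (d m : ℕ) :
    R ((fun x => d + x) '' S) (2*d + m) = R S m := by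
  rw [R_eq, R_eq]
  have : Pset ((fun x => d + x) '' S) (2*d + m)
      = (fun p : ℕ × ℕ => (d + p.1, d + p.2)) '' Pset S m := by
    ext ⟨a, b⟩
    simp only [Pset, Set.mem_setOf_eq, Set.mem_image, Prod.mk.injEq]
    constructor
    · rintro ⟨⟨s, hs, rfl⟩, ⟨t, ht, rfl⟩, hlt, hsum⟩
      exact ⟨(s, t), ⟨hs, ht, by omega, by omega⟩, rfl, rfl⟩
    · rintro ⟨⟨s, t⟩, ⟨hs, ht, hlt, hsum⟩, rfl, rfl⟩
      exact ⟨⟨s, hs, rfl⟩, ⟨t, ht, rfl⟩, by omega, by omega⟩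
  rw [this, Set.ncard_image_of_injective]
  intro p q hpq
  simp only [Prod.mk.injEq] at hpq
  exact Prod.ext (by omega) (by omega)

lemma R_zero_of {S : Set ℕ} {n : ℕ} (h : ∀ s ∈ S, ∀ t ∈ S, s < t → s + t ≠ n) :
    R S n = 0 := by
  rw [R_eq]
  convert Set.ncard_empty (ℕ × ℕ)
  ext ⟨a, b⟩
  simp only [Pset, Set.mem_setOf_eq, Set.mem_empty_iff_false, iff_false, not_and]
  intro h1 h2 h3
  exact h a h1 b h2 h3

lemma R_shift_zero (S : Set ℕ) {d n : ℕ} (h : n < 2*d) :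
    R ((fun x => d + x) '' S) n = 0 := by
  apply R_zero_of
  rintro s ⟨x, _, rfl⟩ t ⟨y, _, rfl⟩ hlt
  dsimp only at hlt ⊢
  omega

lemma M_shift_right (S T : Set ℕ) (d m : ℕ) :
    M S ((fun x => d + x) '' T) (d + m) = M S T m := by
  unfold M
  have : Mset S ((fun x => d + x) '' T) (d + m)
      = (fun p : ℕ × ℕ => (p.1, d + p.2)) '' Mset S T m := by
    ext ⟨a, b⟩
    simp only [Mset, Set.mem_setOf_eq, Set.mem_image, Prod.mk.injEq]
    constructor
    · rintro ⟨hs, ⟨t, ht, rfl⟩, hsum⟩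
      exact ⟨(a, t), ⟨hs, ht, by omega⟩, rfl, rfl⟩
    · rintro ⟨⟨s, t⟩, ⟨hs, ht, hsum⟩, rfl, rfl⟩
      exact ⟨hs, ⟨t, ht, rfl⟩, by omega⟩
  rw [this, Set.ncard_image_of_injective]
  intro p q hpq
  simp only [Prod.mk.injEq] at hpq
  exact Prod.ext (by omega) (by omega)

lemma M_zero_of {S T : Set ℕ} {n : ℕ} (h : ∀ s ∈ S, ∀ t ∈ T, s + t ≠ n) :
    M S T n = 0 := by
  unfold M
  convert Set.ncard_empty (ℕ × ℕ)
  ext ⟨a, b⟩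
  simp only [Mset, Set.mem_setOf_eq, Set.mem_empty_iff_false, iff_false, not_and]
  intro h1 h2
  exact h a h1 b h2

lemma M_shift_right_zero (S T : Set ℕ) {d n : ℕ} (h : n < d) :
    M S ((fun x => d + x) '' T) n = 0 := by
  apply M_zero_of
  rintro s _ t ⟨y, _, rfl⟩
  dsimp only
  omega

lemma M_trunc (S T : Set ℕ) {c m : ℕ} (h : m ≤ c) :
    M S (T ∩ Set.Icc 0 c) m = M S T m := by
  unfold M
  congr 1
  ext ⟨a, b⟩
  simp only [Mset, Set.mem_setOf_eq, Set.mem_inter_iff, Set.mem_Icc]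
  constructor
  · rintro ⟨h1, ⟨h2, _⟩, h3⟩; exact ⟨h1, h2, h3⟩
  · rintro ⟨h1, h2, h3⟩; exact ⟨h1, ⟨h2, by omega⟩, h3⟩

lemma mem_Al (k x : ℕ) : x ∈ Al k ↔ Even ((Nat.digits 2 x).count 1) ∧ x ≤ 2^k - 1 := by
  simp [Al, A, Set.mem_Icc]

lemma mem_Bl (k x : ℕ) : x ∈ Bl k ↔ ¬ Even ((Nat.digits 2 x).count 1) ∧ x ≤ 2^k - 1 := by
  simp [Bl, B, A, Set.mem_Icc]

lemma Al_succ (k : ℕ) :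
    Al (k+1) = Al k ∪ ((fun x => 2^k + x) '' Bl k) := by
  have hp : (1:ℕ) ≤ 2^k := Nat.one_le_two_pow
  have hp2 : (2:ℕ)^(k+1) = 2^k + 2^k := by ring
  ext x
  simp only [mem_Al, Set.mem_union, Set.mem_image, mem_Bl]
  constructor
  · rintro ⟨he, hle⟩
    rcases lt_or_ge x (2^k) with hx | hx
    · left; exact ⟨he, by omega⟩
    · right
      refine ⟨x - 2^k, ⟨?_, by omega⟩, by omega⟩
      have := count_one_pow_add k (x - 2^k) (by omega)
      have hx' : 2^k + (x - 2^k) = x := by omega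
      rw [hx'] at this
      rw [this] at he
      simpa [Nat.even_add_one] using he
  · rintro (⟨he, hle⟩ | ⟨y, ⟨hy, hyle⟩, rfl⟩)
    · exact ⟨he, by omega⟩
    · have := count_one_pow_add k y (by omega)
      refine ⟨?_, by omega⟩
      rw [this]
      simpa [Nat.even_add_one] using hy

lemma Bl_succ (k : ℕ) :
    Bl (k+1) = Bl k ∪ ((fun x => 2^k + x) '' Al k) := by
  have hp : (1:ℕ) ≤ 2^k := Nat.one_le_two_pow
  have hp2 : (2:ℕ)^(k+1) = 2^k + 2^k := by ring
  ext x
  simp only [mem_Bl, Set.mem_union, Set.mem_image, mem_Al]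
  constructor
  · rintro ⟨he, hle⟩
    rcases lt_or_ge x (2^k) with hx | hx
    · left; exact ⟨he, by omega⟩
    · right
      refine ⟨x - 2^k, ⟨?_, by omega⟩, by omega⟩
      have := count_one_pow_add k (x - 2^k) (by omega)
      have hx' : 2^k + (x - 2^k) = x := by omega
      rw [hx'] at this
      rw [this] at he
      simpa [Nat.even_add_one] using he
  · rintro (⟨he, hle⟩ | ⟨y, ⟨hy, hyle⟩, rfl⟩)
    · exact ⟨he, by omega⟩
    · have := count_one_pow_add k y (by omega)
      refine ⟨?_, by omega⟩
      rw [this]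
      simpa [Nat.even_add_one] using hy

lemma Al_subset (k : ℕ) : Al k ⊆ Set.Icc 0 (2^k - 1) := fun x hx => hx.2
lemma Bl_subset (k : ℕ) : Bl k ⊆ Set.Icc 0 (2^k - 1) := fun x hx => hx.2

lemma disj_Al_shift_Bl (k : ℕ) : Disjoint (Al k) ((fun x => 2^k + x) '' Bl k) := by
  rw [Set.disjoint_left]
  rintro x ⟨_, hx⟩ ⟨y, _, rfl⟩
  simp only [Set.mem_Icc] at hx
  have : (1:ℕ) ≤ 2^k := Nat.one_le_two_pow
  omega

lemma disj_Bl_shift_Al (k : ℕ) : Disjoint (Bl k) ((fun x => 2^k + x) '' Al k) := by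
  rw [Set.disjoint_left]
  rintro x ⟨_, hx⟩ ⟨y, _, rfl⟩
  simp only [Set.mem_Icc] at hx
  have : (1:ℕ) ≤ 2^k := Nat.one_le_two_pow
  omega

lemma core : ∀ k : ℕ, ∀ n : ℕ, R (Al k) n = R (Bl k) n := by
  intro k
  induction k with
  | zero =>
    intro n
    have h1 : R (Al 0) n = 0 := by
      apply R_zero_of
      rintro s ⟨_, hs⟩ t ⟨_, ht⟩ hlt
      simp only [Set.mem_Icc, pow_zero] at hs ht
      omega
    have h2 : R (Bl 0) n = 0 := by
      apply R_zero_of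
      rintro s ⟨_, hs⟩ t ⟨_, ht⟩ hlt
      simp only [Set.mem_Icc, pow_zero] at hs ht
      omega
    rw [h1, h2]
  | succ k ih =>
    intro n
    rw [Al_succ, Bl_succ, R_union n (disj_Al_shift_Bl k), R_union n (disj_Bl_shift_Al k)]
    rcases lt_or_ge n (2^k) with h1 | h1
    · rw [R_shift_zero _ (by omega), R_shift_zero _ (by omega),
        M_shift_right_zero _ _ h1, M_shift_right_zero _ _ h1, ih n]
    rcases lt_or_ge n (2*2^k) with h2 | h2
    · obtain ⟨m, rfl⟩ : ∃ m, n = 2^k + m := ⟨n - 2^k, by omega⟩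
      rw [R_shift_zero _ (by omega), R_shift_zero _ (by omega),
        M_shift_right, M_shift_right, ih (2^k + m), M_comm]
    · obtain ⟨m, rfl⟩ : ∃ m, n = 2*2^k + m := ⟨n - 2*2^k, by omega⟩
      have he : 2*2^k + m = 2^k + (2^k + m) := by ring
      rw [R_shift, R_shift, ih (2*2^k+m), ih m, he, M_shift_right, M_shift_right, M_comm]

theorem stmt12 (l : ℕ) (hl : 0 < l)
    (C F : Set ℕ)
    (hC : C = Al (2 * l + 1) ∪ ((fun x => 2 ^ (2 * l + 1) - 2 + x) '' Bl (2 * l + 1)) ∪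
        ((fun x => 2 ^ (2 * l + 2) - 2 + x) '' (Bl (2 * l + 1) ∩ Set.Icc 0 (2 ^ (2 * l + 1) - 3))))
    (hF : F = Bl (2 * l + 1) ∪ ((fun x => 2 ^ (2 * l + 1) - 2 + x) '' Al (2 * l + 1)) ∪
        ((fun x => 2 ^ (2 * l + 2) - 2 + x) '' (Al (2 * l + 1) ∩ Set.Icc 0 (2 ^ (2 * l + 1) - 3)))) :
    ∀ n ≤ 3 * 2 ^ (2 * l + 1) - 5, R C n = R F n := by
  intro n hn
  set k := 2 * l + 1 with hk
  set N := 2 ^ k with hNdef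
  have hN8 : 8 ≤ N := by
    have : 2 ^ 3 ≤ 2 ^ k := Nat.pow_le_pow_right (by norm_num) (by omega)
    simpa using this
  have hN2 : (2:ℕ) ^ (2 * l + 2) - 2 = 2 * N - 2 := by
    have : (2:ℕ) ^ (2 * l + 2) = 2 * N := by rw [hNdef, hk]; ring
    omega
  -- membership facts
  have h0A : Even ((Nat.digits 2 0).count 1) := by simp
  have h1A : ¬ Even ((Nat.digits 2 1).count 1) := by
    rw [Nat.digits_def' (by norm_num : (1:ℕ) < 2) (by norm_num)]
    simp
  have hNm1 : ¬ Even ((Nat.digits 2 (N - 1)).count 1) := by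
    rw [hNdef, count_one_pow_sub_one]
    simp [hk, Nat.even_add_one, parity_simps]
  have hNm2 : Even ((Nat.digits 2 (N - 2)).count 1) := by
    have he : N - 2 = 2 * (2 ^ (2 * l) - 1) := by
      have h1 : (1:ℕ) ≤ 2 ^ (2*l) := Nat.one_le_two_pow
      have : N = 2 * 2 ^ (2*l) := by rw [hNdef, hk]; ring
      omega
    rw [he, count_one_two_mul _ (by
      have : (2:ℕ) ≤ 2 ^ (2*l) := by
        calc (2:ℕ) = 2^1 := by norm_num
        _ ≤ 2 ^ (2*l) := Nat.pow_le_pow_right (by norm_num) (by omega)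
      omega), count_one_pow_sub_one]
    simp
  -- bounds on elements
  have hAl_le : ∀ x ∈ Al k, x ≤ N - 2 := by
    intro x hx
    rw [mem_Al] at hx
    rcases Nat.lt_or_ge x (N-1) with h | h
    · omega
    · have : x = N - 1 := by omega
      rw [this] at hx
      exact absurd hx.1 hNm1
  have hBl_ge : ∀ x ∈ Bl k, 1 ≤ x ∧ x ≤ N - 1 := by
    intro x hx
    rw [mem_Bl] at hx
    rcases Nat.eq_zero_or_pos x with h | h
    · rw [h] at hx; exact absurd h0A hx.1
    · omega
  -- disjointness for C
  have dC1 : Disjoint (Al k) ((fun x => N - 2 + x) '' Bl k) := by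
    rw [Set.disjoint_left]
    rintro x hx ⟨y, hy, rfl⟩
    have h1 := hAl_le _ hx
    have h2 := (hBl_ge _ hy).1
    dsimp only at h1
    omega
  have dC2 : Disjoint (Al k ∪ (fun x => N - 2 + x) '' Bl k)
      ((fun x => 2 * N - 2 + x) '' (Bl k ∩ Set.Icc 0 (N - 3))) := by
    rw [Set.disjoint_left]
    rintro x hx ⟨y, hy, rfl⟩
    dsimp only at *
    rcases hx with hx | ⟨z, hz, heq⟩
    · have := hAl_le _ hx; omega
    · have := (hBl_ge _ hz).2; dsimp only at heq; omega
  -- disjointness for F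
  have dF1 : Disjoint (Bl k) ((fun x => N - 2 + x) '' Al k) := by
    rw [Set.disjoint_left]
    rintro x hx ⟨y, hy, rfl⟩
    have h1 := (hBl_ge _ hx).2
    have h2 := hAl_le _ hy
    dsimp only at *
    rcases Nat.eq_zero_or_pos y with h | h
    · have hx' : N - 2 + y = N - 2 := by omega
      rw [hx'] at hx
      rw [mem_Bl] at hx
      exact hx.1 hNm2
    · have : y = 1 ∨ 2 ≤ y := by omega
      rcases this with h' | h'
      · rw [h'] at hy
        rw [mem_Al] at hy
        exact h1A hy.1
      · omega
  have dF2 : Disjoint (Bl k ∪ (fun x => N - 2 + x) '' Al k)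
      ((fun x => 2 * N - 2 + x) '' (Al k ∩ Set.Icc 0 (N - 3))) := by
    rw [Set.disjoint_left]
    rintro x hx ⟨y, hy, rfl⟩
    dsimp only at *
    rcases hx with hx | ⟨z, hz, heq⟩
    · have := (hBl_ge _ hx).2; omega
    · have := hAl_le _ hz; dsimp only at heq; omega
  rw [hC, hF, hN2]
  rw [R_union n dC2, R_union n dC1, R_union n dF2, R_union n dF1]
  rw [M_union_left _ n dC1, M_union_left _ n dF1]
  -- vanishing terms
  have hRZ_C : R ((fun x => 2*N - 2 + x) '' (Bl k ∩ Set.Icc 0 (N - 3))) n = 0 := by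
    apply R_zero_of
    rintro s ⟨y, _, rfl⟩ t ⟨z, _, rfl⟩ _
    dsimp only
    omega
  have hRZ_F : R ((fun x => 2*N - 2 + x) '' (Al k ∩ Set.Icc 0 (N - 3))) n = 0 := by
    apply R_zero_of
    rintro s ⟨y, _, rfl⟩ t ⟨z, _, rfl⟩ _
    dsimp only
    omega
  have hMYZ_C : M ((fun x => N - 2 + x) '' Bl k)
      ((fun x => 2*N - 2 + x) '' (Bl k ∩ Set.Icc 0 (N - 3))) n = 0 := by
    apply M_zero_of
    rintro s ⟨y, hy, rfl⟩ t ⟨z, _, rfl⟩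
    have := (hBl_ge _ hy).1
    dsimp only
    omega
  have hMYZ_F : M ((fun x => N - 2 + x) '' Al k)
      ((fun x => 2*N - 2 + x) '' (Al k ∩ Set.Icc 0 (N - 3))) n = 0 := by
    apply M_zero_of
    rintro s ⟨y, hy, rfl⟩ t ⟨z, _, rfl⟩
    dsimp only
    omega
  rw [hRZ_C, hRZ_F, hMYZ_C, hMYZ_F]
  -- now case split
  rcases Nat.lt_or_ge n (N - 2) with h1 | h1
  · rw [R_shift_zero _ (by omega), R_shift_zero _ (by omega),
      M_shift_right_zero _ _ (by omega : n < N - 2),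
      M_shift_right_zero _ _ (by omega : n < N - 2),
      M_shift_right_zero _ _ (by omega : n < 2*N - 2),
      M_shift_right_zero _ _ (by omega : n < 2*N - 2),
      core k n]
  rcases Nat.lt_or_ge n (2*N - 4) with h2 | h2
  · obtain ⟨m, hm⟩ : ∃ m, n = (N - 2) + m := ⟨n - (N-2), by omega⟩
    have eXY_C : M (Al k) ((fun x => N - 2 + x) '' Bl k) n = M (Al k) (Bl k) m := by
      rw [hm, M_shift_right]
    have eXY_F : M (Bl k) ((fun x => N - 2 + x) '' Al k) n = M (Bl k) (Al k) m := by
      rw [hm, M_shift_right]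
    rw [eXY_C, eXY_F, R_shift_zero _ (by omega), R_shift_zero _ (by omega),
      M_shift_right_zero _ _ (by omega : n < 2*N - 2),
      M_shift_right_zero _ _ (by omega : n < 2*N - 2),
      core k n, M_comm]
  rcases Nat.lt_or_ge n (2*N - 2) with h3 | h3
  · obtain ⟨m, hm⟩ : ∃ m, n = 2*(N - 2) + m := ⟨n - 2*(N-2), by omega⟩
    obtain ⟨m', hm'⟩ : ∃ m', n = (N - 2) + m' := ⟨n - (N-2), by omega⟩
    have eY_C : R ((fun x => N - 2 + x) '' Bl k) n = R (Bl k) m := by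
      rw [hm, R_shift]
    have eY_F : R ((fun x => N - 2 + x) '' Al k) n = R (Al k) m := by
      rw [hm, R_shift]
    have eXY_C : M (Al k) ((fun x => N - 2 + x) '' Bl k) n = M (Al k) (Bl k) m' := by
      rw [hm', M_shift_right]
    have eXY_F : M (Bl k) ((fun x => N - 2 + x) '' Al k) n = M (Bl k) (Al k) m' := by
      rw [hm', M_shift_right]
    rw [eY_C, eY_F, eXY_C, eXY_F,
      M_shift_right_zero _ _ (by omega : n < 2*N - 2),
      M_shift_right_zero _ _ (by omega : n < 2*N - 2),
      core k n, core k m, M_comm]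
  · obtain ⟨m, hm⟩ : ∃ m, n = (2*N - 2) + m := ⟨n - (2*N - 2), by omega⟩
    have hmle : m ≤ N - 3 := by omega
    obtain ⟨m1, hm1⟩ : ∃ m1, n = 2*(N - 2) + m1 := ⟨n - 2*(N-2), by omega⟩
    obtain ⟨m2, hm2⟩ : ∃ m2, n = (N - 2) + m2 := ⟨n - (N-2), by omega⟩
    have eY_C : R ((fun x => N - 2 + x) '' Bl k) n = R (Bl k) m1 := by
      rw [hm1, R_shift]
    have eY_F : R ((fun x => N - 2 + x) '' Al k) n = R (Al k) m1 := by
      rw [hm1, R_shift]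
    have eXY_C : M (Al k) ((fun x => N - 2 + x) '' Bl k) n = M (Al k) (Bl k) m2 := by
      rw [hm2, M_shift_right]
    have eXY_F : M (Bl k) ((fun x => N - 2 + x) '' Al k) n = M (Bl k) (Al k) m2 := by
      rw [hm2, M_shift_right]
    have eXZ_C : M (Al k) ((fun x => 2*N - 2 + x) '' (Bl k ∩ Set.Icc 0 (N-3))) n
        = M (Al k) (Bl k) m := by
      rw [hm, M_shift_right, M_trunc _ _ hmle]
    have eXZ_F : M (Bl k) ((fun x => 2*N - 2 + x) '' (Al k ∩ Set.Icc 0 (N-3))) n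
        = M (Bl k) (Al k) m := by
      rw [hm, M_shift_right, M_trunc _ _ hmle]
    rw [eY_C, eY_F, eXY_C, eXY_F, eXZ_C, eXZ_F,
      core k n, core k m1, M_comm (Al k) (Bl k) m2, M_comm (Al k) (Bl k) m]
end

section
/- Let m ≥ 3 and suppose C ∪ D = [0, m], C ∩ D = {r_1, r_2} with r_1 < r_2, 0 ∈ C, r_1 even, r_1 + r_2 ≤ m, and R_C(n) = R_D(n) for all n ∈ ℕ. Then r_1 ≥ 4. -/
open Set

lemma R_pair_one (S : Set ℕ) (a b n : ℕ) (hab : a < b) (hn : a + b = n)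
    (hu : ∀ x y : ℕ, x < y → x + y = n → x = a ∧ y = b)
    (ha : a ∈ S) (hb : b ∈ S) : R S n = 1 := by
  unfold R
  have hset : {p : ℕ × ℕ | p.1 ∈ S ∧ p.2 ∈ S ∧ p.1 < p.2 ∧ p.1 + p.2 = n}
      = {(a, b)} := by
    ext ⟨x, y⟩
    simp only [Set.mem_setOf_eq, Set.mem_singleton_iff, Prod.mk.injEq]
    constructor
    · rintro ⟨_, _, hlt, hsum⟩; exact hu x y hlt hsum
    · rintro ⟨rfl, rfl⟩; exact ⟨ha, hb, hab, hn⟩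
  rw [hset, Set.ncard_singleton]

lemma R_pair_zero (S : Set ℕ) (a b n : ℕ) (hn : a + b = n)
    (hu : ∀ x y : ℕ, x < y → x + y = n → x = a ∧ y = b)
    (h : ¬ (a ∈ S ∧ b ∈ S)) : R S n = 0 := by
  unfold R
  have hset : {p : ℕ × ℕ | p.1 ∈ S ∧ p.2 ∈ S ∧ p.1 < p.2 ∧ p.1 + p.2 = n}
      = ∅ := by
    ext ⟨x, y⟩
    simp only [Set.mem_setOf_eq, Set.mem_empty_iff_false, iff_false, not_and]
    intro hx hy hlt hsum
    obtain ⟨rfl, rfl⟩ := hu x y hlt hsum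
    exact h ⟨hx, hy⟩
  rw [hset, Set.ncard_empty]

theorem stmt14 (m r1 r2 : ℕ) (hm : 3 ≤ m) (C D : Set ℕ)
    (h1 : C ∪ D = Set.Icc 0 m) (h2 : C ∩ D = {r1, r2}) (h3 : r1 < r2)
    (h4 : (0 : ℕ) ∈ C) (h5 : Even r1) (h6 : r1 + r2 ≤ m)
    (h7 : ∀ n : ℕ, R C n = R D n) :
    4 ≤ r1 := by
  -- basic membership facts
  have memU : ∀ x : ℕ, x ≤ m → x ∈ C ∨ x ∈ D := by
    intro x hx
    have : x ∈ C ∪ D := by rw [h1]; exact Set.mem_Icc.mpr ⟨Nat.zero_le x, hx⟩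
    exact this
  have memI : ∀ x : ℕ, x ∈ C → x ∈ D → x = r1 ∨ x = r2 := by
    intro x hxC hxD
    have : x ∈ C ∩ D := ⟨hxC, hxD⟩
    rw [h2] at this
    exact this
  have hr1C : r1 ∈ C ∧ r1 ∈ D := by
    have : r1 ∈ C ∩ D := by rw [h2]; left; rfl
    exact this
  have hr2C : r2 ∈ C ∧ r2 ∈ D := by
    have : r2 ∈ C ∩ D := by rw [h2]; right; rfl
    exact this
  have hu1 : ∀ x y : ℕ, x < y → x + y = 1 → x = 0 ∧ y = 1 := fun x y hx hy => by omega
  have hu2 : ∀ x y : ℕ, x < y → x + y = 2 → x = 0 ∧ y = 2 := fun x y hx hy => by omega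
  by_contra hcon
  push_neg at hcon
  have hpar : r1 % 2 = 0 := Nat.even_iff.mp h5
  have : r1 = 0 ∨ r1 = 2 := by omega
  rcases this with rfl | rfl
  · -- r1 = 0 : 0 ∈ D as well
    have h0D : (0 : ℕ) ∈ D := hr1C.2
    by_cases hr2 : r2 = 1
    · -- 0 and 1 in both; 2 in exactly one of C, D
      subst hr2
      have h2m : (2 : ℕ) ≤ m := by omega
      have h2not : ¬ ((2 : ℕ) ∈ C ∧ (2 : ℕ) ∈ D) := by
        rintro ⟨hc, hd⟩
        rcases memI 2 hc hd with h | h <;> omega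
      have e := h7 2
      rcases memU 2 h2m with hc | hd
      · have hd : (2 : ℕ) ∉ D := fun hd => h2not ⟨hc, hd⟩
        rw [R_pair_one C 0 2 2 (by omega) (by omega) hu2 h4 hc,
            R_pair_zero D 0 2 2 (by omega) hu2 (by tauto)] at e
        exact one_ne_zero e
      · have hc : (2 : ℕ) ∉ C := fun hc => h2not ⟨hc, hd⟩
        rw [R_pair_one D 0 2 2 (by omega) (by omega) hu2 h0D hd,
            R_pair_zero C 0 2 2 (by omega) hu2 (by tauto)] at e
        exact one_ne_zero e.symm
    · -- r2 ≥ 2, so 1 is in exactly one of C, D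
      have hr2' : 2 ≤ r2 := by omega
      have h1m : (1 : ℕ) ≤ m := by omega
      have h1not : ¬ ((1 : ℕ) ∈ C ∧ (1 : ℕ) ∈ D) := by
        rintro ⟨hc, hd⟩
        rcases memI 1 hc hd with h | h <;> omega
      have e := h7 1
      rcases memU 1 h1m with hc | hd
      · have hd : (1 : ℕ) ∉ D := fun hd => h1not ⟨hc, hd⟩
        rw [R_pair_one C 0 1 1 (by omega) (by omega) hu1 h4 hc,
            R_pair_zero D 0 1 1 (by omega) hu1 (by tauto)] at e
        exact one_ne_zero e
      · have hc : (1 : ℕ) ∉ C := fun hc => h1not ⟨hc, hd⟩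
        rw [R_pair_one D 0 1 1 (by omega) (by omega) hu1 h0D hd,
            R_pair_zero C 0 1 1 (by omega) hu1 (by tauto)] at e
        exact one_ne_zero e.symm
  · -- r1 = 2 : 0 ∉ D, but 2 ∈ C and 2 ∈ D
    have h0D : (0 : ℕ) ∉ D := by
      intro hd
      rcases memI 0 h4 hd with h | h <;> omega
    have e := h7 2
    rw [R_pair_one C 0 2 2 (by omega) (by omega) hu2 h4 hr1C.1,
        R_pair_zero D 0 2 2 (by omega) hu2 (by tauto)] at e
    exact one_ne_zero e
end

section
/- Let m ≥ 3 and suppose C ∪ D = [0, m], C ∩ D = {r_1, r_2} with r_1 < r_2, 0 ∈ C, r_1 even, r_1 + r_2 ≤ m, and R_C(n) = R_D(n) for all n ∈ ℕ. Then r_2 = r_1 + 1. -/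
open Set

open Finset

/-- Thue-Morse sign: 1 if even binary weight, -1 otherwise. -/
def tm (n : ℕ) : ℤ := if Even ((Nat.digits 2 n).count 1) then 1 else -1

lemma tm_zero : tm 0 = 1 := by simp [tm]

lemma tm_pm (n : ℕ) : tm n = 1 ∨ tm n = -1 := by
  unfold tm; split <;> simp

lemma tm_ne_zero (n : ℕ) : tm n ≠ 0 := by rcases tm_pm n with h | h <;> omega

lemma tm_sq (n : ℕ) : tm n * tm n = 1 := by
  rcases tm_pm n with h | h <;> rw [h] <;> ring

lemma tm_digits_succ (n : ℕ) (hn : 0 < n) :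
    Nat.digits 2 n = n % 2 :: Nat.digits 2 (n / 2) :=
  Nat.digits_def' (by norm_num) hn

lemma tm_two_mul (k : ℕ) : tm (2 * k) = tm k := by
  rcases Nat.eq_zero_or_pos k with rfl | hk
  · norm_num
  · unfold tm
    rw [tm_digits_succ (2 * k) (by omega)]
    have h1 : 2 * k % 2 = 0 := by omega
    have h2 : 2 * k / 2 = k := by omega
    rw [h1, h2]
    simp

lemma tm_two_mul_add_one (k : ℕ) : tm (2 * k + 1) = -tm k := by
  unfold tm
  rw [tm_digits_succ (2 * k + 1) (by omega)]
  have h1 : (2 * k + 1) % 2 = 1 := by omega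
  have h2 : (2 * k + 1) / 2 = k := by omega
  rw [h1, h2]
  rcases Nat.even_or_odd ((Nat.digits 2 k).count 1) with h | h
  · simp [h, List.count_cons, Nat.even_add_one, Nat.not_even_iff_odd]
  · have h' : ¬ Even ((Nat.digits 2 k).count 1) := Nat.not_even_iff_odd.2 h
    simp [h', List.count_cons, Nat.even_add_one, h]

lemma tm_one : tm 1 = -1 := by
  have := tm_two_mul_add_one 0; simpa [tm_zero] using this

lemma tm_two : tm 2 = -1 := by
  have := tm_two_mul 1; simp [tm_one] at this; omega

lemma tm_three : tm 3 = 1 := by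
  have := tm_two_mul_add_one 1; simp [tm_one] at this; omega

lemma tm_four : tm 4 = -1 := by
  have := tm_two_mul 2; simp [tm_two] at this; omega

lemma tm_five : tm 5 = 1 := by
  have := tm_two_mul_add_one 2; simp [tm_two] at this; omega

/-- adding a high power of two flips the sign -/
lemma tm_pow_add (a x : ℕ) (hx : x < 2 ^ a) : tm (2 ^ a + x) = -tm x := by
  induction a generalizing x with
  | zero =>
    interval_cases x
    simp [tm_one, tm_zero]
  | succ a ih =>
    rcases Nat.even_or_odd x with ⟨y, hy⟩ | ⟨y, hy⟩
    · subst hy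
      have hy2 : y < 2 ^ a := by rw [pow_succ] at hx; omega
      have : 2 ^ (a+1) + (y + y) = 2 * (2 ^ a + y) := by ring
      rw [this, tm_two_mul, ih y hy2, ← two_mul, tm_two_mul]
    · subst hy
      have hy2 : y < 2 ^ a := by rw [pow_succ] at hx; omega
      have : 2 ^ (a+1) + (2 * y + 1) = 2 * (2 ^ a + y) + 1 := by ring
      rw [this, tm_two_mul_add_one, ih y hy2, tm_two_mul_add_one]

lemma tm_pow (a : ℕ) (_ha : 0 < a) : tm (2 ^ a) = -1 := by
  have := tm_pow_add a 0 (by positivity)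
  simpa [tm_zero] using this

/-- t(2^k - 1) = (-1)^k -/
lemma tm_pow_sub_one (k : ℕ) : tm (2 ^ k - 1) = (-1) ^ k := by
  induction k with
  | zero => simp [tm_zero]
  | succ k ih =>
    have h : 2 ^ (k+1) - 1 = 2 * (2 ^ k - 1) + 1 := by
      have : 1 ≤ 2 ^ k := Nat.one_le_two_pow
      rw [pow_succ]; omega
    rw [h, tm_two_mul_add_one, ih]
    ring

lemma tm_mul_pow (a k : ℕ) : tm (k * 2 ^ a) = tm k := by
  induction a with
  | zero => simp
  | succ a ih =>
    have : k * 2 ^ (a+1) = 2 * (k * 2 ^ a) := by ring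
    rw [this, tm_two_mul, ih]

/-- anti-shift property kill: t(c+K) = -t(K) on a range reaching K = c is impossible. -/
lemma tm_S_kill (c K0 : ℕ) (hc : c ≤ K0) (h : ∀ K ≤ K0, tm (c + K) = -tm K) : False := by
  have h1 := h c hc
  have h2 : tm (c + c) = tm c := by
    have : c + c = 2 * c := by ring
    rw [this, tm_two_mul]
  rw [h2] at h1
  have := tm_ne_zero c
  omega

/-- full-range (anti)palindrome classification: Q+1 must be a power of 2. -/
lemma tm_M_class (Q : ℕ) (σ : ℤ) (h : ∀ z ≤ Q, tm (Q - z) = σ * tm z) :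
    ∃ k, Q + 1 = 2 ^ k := by
  induction Q using Nat.strong_induction_on generalizing σ with
  | _ Q ih =>
    rcases Nat.eq_zero_or_pos Q with rfl | hQ
    · exact ⟨0, rfl⟩
    rcases Nat.even_or_odd Q with ⟨q, hq⟩ | ⟨q, hq⟩
    · -- Q = 2q even, q ≥ 1 : contradiction
      exfalso
      have hq1 : 1 ≤ q := by omega
      have e1 := h (2 * (q - 1)) (by omega)
      have e2 := h (2 * (q - 1) + 1) (by omega)
      have p1 : Q - 2 * (q - 1) = 2 := by omega
      have p2 : Q - (2 * (q - 1) + 1) = 1 := by omega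
      rw [p1, tm_two_mul] at e1
      rw [p2, tm_two_mul_add_one] at e2
      -- e1 : tm 2 = σ * tm (q-1) ; e2 : tm 1 = σ * (- tm (q-1))
      rw [tm_two] at e1
      rw [tm_one] at e2
      have : (σ * tm (q-1)) + (σ * -tm (q-1)) = 0 := by ring
      omega
    · -- Q = 2q+1 odd: reduce to (q, -σ)
      have hM : ∀ z ≤ q, tm (q - z) = (-σ) * tm z := by
        intro z hz
        have e := h (2 * z) (by omega)
        have p : Q - 2 * z = 2 * (q - z) + 1 := by omega
        rw [p, tm_two_mul_add_one, tm_two_mul] at e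
        -- e : -tm (q - z) = σ * tm z
        have : tm (q - z) = -(σ * tm z) := by omega
        rw [this]; ring
      obtain ⟨k, hk⟩ := ih q (by omega) (σ := -σ) hM
      exact ⟨k + 1, by rw [pow_succ]; omega⟩

def wt (m r1 r2 i : ℕ) : ℤ :=
  (if i ≤ m then 1 else 0) + (if i = r1 then 1 else 0) + (if i = r2 then 1 else 0)

structure Sys (m r1 r2 : ℕ) (ε : ℕ → ℤ) : Prop where
  h12 : r1 < r2
  h2m : r2 ≤ m
  hpm : ∀ n, n ≤ m → n ≠ r1 → n ≠ r2 → ε n = 1 ∨ ε n = -1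
  hz1 : ε r1 = 0
  hz2 : ε r2 = 0
  hgt : ∀ n, m < n → ε n = 0
  star : ∀ n, (∑ j ∈ Finset.range (n+1), wt m r1 r2 (n - j) * ε j)
      = if 2 ∣ n then ε (n/2) else 0

namespace Sys

variable {m r1 r2 : ℕ} {ε : ℕ → ℤ}

/-- helper: sum of a delta-guarded term -/
lemma sum_delta (f : ℕ → ℤ) (n r : ℕ) :
    (∑ j ∈ Finset.range (n+1), (if n - j = r then (1:ℤ) else 0) * f j)
      = if r ≤ n then f (n - r) else 0 := by
  rcases le_or_gt r n with h | h
  · rw [Finset.sum_eq_single (n - r)]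
    · simp [Nat.sub_sub_self h, h]
    · intro b hb hbne
      simp only [Finset.mem_range] at hb
      have : n - b ≠ r := by omega
      simp [this]
    · intro hn; exfalso; apply hn; simp
  · rw [Finset.sum_eq_zero, if_neg (by omega)]
    intro b hb
    simp only [Finset.mem_range] at hb
    have : n - b ≠ r := by omega
    simp [this]

/-- decomposition of the weighted sum, no hypotheses needed -/
lemma sum_split (f : ℕ → ℤ) (M a b n : ℕ) :
    (∑ j ∈ Finset.range (n+1), wt M a b (n - j) * f j)
      = (∑ j ∈ Finset.Ico (n - M) (n+1), f j)
      + (if a ≤ n then f (n - a) else 0)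
      + (if b ≤ n then f (n - b) else 0) := by
  have hsplit : ∀ j ∈ Finset.range (n+1), wt M a b (n - j) * f j
      = (if n - M ≤ j then (1:ℤ) else 0) * f j
        + (if n - j = a then (1:ℤ) else 0) * f j
        + (if n - j = b then (1:ℤ) else 0) * f j := by
    intro j hj
    simp only [Finset.mem_range] at hj
    unfold wt
    have : (n - j ≤ M) ↔ (n - M ≤ j) := by omega
    rw [if_congr this rfl rfl]
    ring
  rw [Finset.sum_congr rfl hsplit]
  rw [Finset.sum_add_distrib, Finset.sum_add_distrib]
  rw [sum_delta, sum_delta]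
  congr 1
  congr 1
  rw [Finset.range_eq_Ico]
  rcases le_or_gt (n - M) n with hnm | hnm
  · rw [← Finset.sum_Ico_consecutive _ (Nat.zero_le (n - M)) (by omega : n - M ≤ n + 1)]
    have hz : (∑ j ∈ Finset.Ico 0 (n - M), (if n - M ≤ j then (1:ℤ) else 0) * f j) = 0 := by
      apply Finset.sum_eq_zero; intro b hb
      simp only [Finset.mem_Ico] at hb
      rw [if_neg (by omega)]; ring
    rw [hz, zero_add]
    apply Finset.sum_congr rfl
    intro b hb
    simp only [Finset.mem_Ico] at hb
    rw [if_pos (by omega)]; ring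
  · omega

/-- three-part form of the star identity, valid for every n. -/
lemma sum3 (S : Sys m r1 r2 ε) (n : ℕ) :
    (∑ j ∈ Finset.Ico (n - m) (n+1), ε j)
      + (if r1 ≤ n then ε (n - r1) else 0)
      + (if r2 ≤ n then ε (n - r2) else 0)
      = if 2 ∣ n then ε (n/2) else 0 := by
  have h := S.star n
  rw [sum_split] at h
  exact h

/-- the "low" form: for n ≤ m. -/
lemma starE (S : Sys m r1 r2 ε) (n : ℕ) (hn : n ≤ m) :
    (∑ j ∈ Finset.range (n+1), ε j)
      + (if r1 ≤ n then ε (n - r1) else 0)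
      + (if r2 ≤ n then ε (n - r2) else 0)
      = if 2 ∣ n then ε (n/2) else 0 := by
  have h := S.sum3 n
  rwa [show n - m = 0 by omega, ← Finset.range_eq_Ico] at h

lemma wtsum (h12 : r1 < r2) (h2m : r2 ≤ m) (N : ℕ) (hN : m + 1 ≤ N) :
    (∑ i ∈ Finset.range N, wt m r1 r2 i) = (m : ℤ) + 3 := by
  unfold wt
  rw [Finset.sum_add_distrib, Finset.sum_add_distrib]
  have e1 : (∑ i ∈ Finset.range N, if i ≤ m then (1:ℤ) else 0) = (m:ℤ) + 1 := by
    rw [Finset.sum_boole]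
    have : Finset.filter (fun i => i ≤ m) (Finset.range N) = Finset.range (m+1) := by
      ext i
      simp only [Finset.mem_filter, Finset.mem_range]
      omega
    rw [this]
    simp
  have e2 : (∑ i ∈ Finset.range N, if i = r1 then (1:ℤ) else 0) = 1 := by
    rw [Finset.sum_ite_eq' (Finset.range N) r1 (fun _ => (1:ℤ))]
    rw [if_pos (by simp; omega)]
  have e3 : (∑ i ∈ Finset.range N, if i = r2 then (1:ℤ) else 0) = 1 := by
    rw [Finset.sum_ite_eq' (Finset.range N) r2 (fun _ => (1:ℤ))]
    rw [if_pos (by simp; omega)]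
  rw [e1, e2, e3]; ring

lemma even_reindex (g : ℕ → ℤ) (K : ℕ) :
    (∑ n ∈ Finset.range (2*K), if 2 ∣ n then g (n/2) else 0) = ∑ k ∈ Finset.range K, g k := by
  induction K with
  | zero => simp
  | succ K ih =>
    have : 2 * (K+1) = (2*K) + 1 + 1 := by ring
    rw [this, Finset.sum_range_succ, Finset.sum_range_succ, ih, Finset.sum_range_succ]
    have h1 : ¬ (2 ∣ (2*K+1)) := by omega
    have h2 : (2 ∣ (2*K)) := ⟨K, rfl⟩
    rw [if_neg h1, if_pos h2]
    simp

/-- total sum of ε is zero -/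
lemma Esum_zero (S : Sys m r1 r2 ε) :
    (∑ j ∈ Finset.range (m+1), ε j) = 0 := by
  set N := 2*(m+1)+1 with hN
  have key : (∑ n ∈ Finset.range N, ∑ j ∈ Finset.range (n+1), wt m r1 r2 (n - j) * ε j)
      = ∑ n ∈ Finset.range N, (if 2 ∣ n then ε (n/2) else 0) :=
    Finset.sum_congr rfl (fun n _ => S.star n)
  have lhs : (∑ n ∈ Finset.range N, ∑ j ∈ Finset.range (n+1), wt m r1 r2 (n - j) * ε j)
      = ((m:ℤ) + 3) * ∑ j ∈ Finset.range (m+1), ε j := by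
    rw [Finset.sum_comm' (t' := Finset.range N) (s' := fun j => Finset.Ico j N)
      (by intro n j; simp only [Finset.mem_range, Finset.mem_Ico]; omega)]
    have e : ∀ j ∈ Finset.range N, (∑ n ∈ Finset.Ico j N, wt m r1 r2 (n - j) * ε j)
        = (∑ i ∈ Finset.range (N - j), wt m r1 r2 i) * ε j := by
      intro j hj
      rw [Finset.sum_Ico_eq_sum_range, Finset.sum_mul]
      apply Finset.sum_congr rfl
      intro i _
      rw [Nat.add_sub_cancel_left]
    rw [Finset.sum_congr rfl e]
    have split : (∑ j ∈ Finset.range N, (∑ i ∈ Finset.range (N - j), wt m r1 r2 i) * ε j)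
        = ∑ j ∈ Finset.range (m+1), (∑ i ∈ Finset.range (N - j), wt m r1 r2 i) * ε j := by
      rw [← Finset.sum_range_add_sum_Ico _ (by omega : m + 1 ≤ N)]
      have : (∑ j ∈ Finset.Ico (m+1) N, (∑ i ∈ Finset.range (N - j), wt m r1 r2 i) * ε j) = 0 := by
        apply Finset.sum_eq_zero
        intro j hj
        simp only [Finset.mem_Ico] at hj
        rw [S.hgt j (by omega), mul_zero]
      rw [this, add_zero]
    rw [split, Finset.mul_sum]
    apply Finset.sum_congr rfl
    intro j hj
    simp only [Finset.mem_range] at hj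
    rw [wtsum S.h12 S.h2m (N - j) (by omega)]
  have rhs : (∑ n ∈ Finset.range N, (if 2 ∣ n then ε (n/2) else 0))
      = ∑ j ∈ Finset.range (m+1), ε j := by
    rw [hN, Finset.sum_range_succ, even_reindex]
    have h2 : (2 ∣ 2*(m+1)) := ⟨m+1, rfl⟩
    rw [if_pos h2]
    have : (2*(m+1))/2 = m + 1 := by omega
    rw [this, S.hgt (m+1) (by omega), add_zero]
  rw [lhs, rhs] at key
  have : ((m:ℤ) + 2) * (∑ j ∈ Finset.range (m+1), ε j) = 0 := by linarith
  rcases mul_eq_zero.1 this with h | h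
  · exfalso; have : (0:ℤ) < (m:ℤ) + 2 := by positivity
    omega
  · exact h


/-- the "high" form of the identity at n = m + x, 1 ≤ x ≤ m+1. -/
lemma starHigh (S : Sys m r1 r2 ε) (x : ℕ) (hx1 : 1 ≤ x) (hx2 : x ≤ m + 1) :
    -(∑ j ∈ Finset.range x, ε j) + ε (m + x - r1) + ε (m + x - r2)
      = if 2 ∣ (m + x) then ε ((m + x)/2) else 0 := by
  have h12 := S.h12
  have h2m := S.h2m
  have h := S.sum3 (m + x)
  have hwin : (∑ j ∈ Finset.Ico (m + x - m) (m + x + 1), ε j)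
      = -(∑ j ∈ Finset.range x, ε j) := by
    have h1 : m + x - m = x := by omega
    rw [h1]
    have h2 : (∑ j ∈ Finset.Ico x (m + x + 1), ε j)
        = ∑ j ∈ Finset.Ico x (m + 1), ε j := by
      rw [← Finset.sum_Ico_consecutive _ (by omega : x ≤ m + 1) (by omega : m + 1 ≤ m + x + 1)]
      have : (∑ j ∈ Finset.Ico (m+1) (m + x + 1), ε j) = 0 :=
        Finset.sum_eq_zero (fun j hj => S.hgt j (by simp only [Finset.mem_Ico] at hj; omega))
      rw [this, add_zero]
    rw [h2]
    have h3 : (∑ j ∈ Finset.range x, ε j) + (∑ j ∈ Finset.Ico x (m + 1), ε j) = 0 := by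
      rw [Finset.range_eq_Ico, Finset.sum_Ico_consecutive _ (Nat.zero_le x) (by omega : x ≤ m+1)]
      rw [← Finset.range_eq_Ico]
      exact S.Esum_zero
    linarith
  have g1 : (if r1 ≤ m + x then ε (m + x - r1) else 0) = ε (m + x - r1) := if_pos (by omega)
  have g2 : (if r2 ≤ m + x then ε (m + x - r2) else 0) = ε (m + x - r2) := if_pos (by omega)
  rw [hwin, g1, g2] at h
  exact h

/-- reflected system -/
lemma reflect (S : Sys m r1 r2 ε) :
    Sys m (m - r2) (m - r1) (fun x => if x ≤ m then ε (m - x) else 0) := by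
  have h12 := S.h12
  have h2m := S.h2m
  refine ⟨by omega, by omega, ?_, ?_, ?_, ?_, ?_⟩
  · intro n hn hn1 hn2
    simp only [if_pos hn]
    exact S.hpm (m - n) (by omega) (by omega) (by omega)
  · simp only [if_pos (by omega : m - r2 ≤ m), show m - (m - r2) = r2 by omega]
    exact S.hz2
  · simp only [if_pos (by omega : m - r1 ≤ m), show m - (m - r1) = r1 by omega]
    exact S.hz1
  · intro n hn
    simp only [if_neg (by omega : ¬ n ≤ m)]
  · intro nt
    rw [sum_split]
    rcases le_or_gt nt (2*m) with hnt | hnt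
    · set n := 2*m - nt with hn
      have h := S.sum3 n
      have hwin : (∑ j ∈ Finset.Ico (nt - m) (nt+1), (fun x => if x ≤ m then ε (m - x) else 0) j)
          = ∑ y ∈ Finset.Ico (n - m) (n+1), ε y := by
        have A1 : (∑ j ∈ Finset.Ico (nt - m) (nt+1), (fun x => if x ≤ m then ε (m - x) else 0) j)
            = ∑ y ∈ Finset.Ico (nt - m) (nt+1),
                (if nt - m ≤ y ∧ y ≤ nt ∧ y ≤ m then ε (m - y) else 0) := by
          apply Finset.sum_congr rfl
          intro y hy
          simp only [Finset.mem_Ico] at hy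
          show (if y ≤ m then ε (m - y) else 0) = _
          by_cases hym : y ≤ m
          · rw [if_pos hym, if_pos (by omega)]
          · rw [if_neg hym, if_neg (by omega)]
        have A2 : (∑ y ∈ Finset.Ico (nt - m) (nt+1),
              (if nt - m ≤ y ∧ y ≤ nt ∧ y ≤ m then ε (m - y) else 0))
            = ∑ y ∈ Finset.range (2*m+1),
                (if nt - m ≤ y ∧ y ≤ nt ∧ y ≤ m then ε (m - y) else 0) := by
          apply Finset.sum_subset
          · intro y hy
            simp only [Finset.mem_Ico] at hy
            simp only [Finset.mem_range]
            omega
          · intro y hy hyn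
            simp only [Finset.mem_Ico] at hyn
            rw [if_neg (by omega)]
        have A3 : (∑ y ∈ Finset.range (2*m+1),
              (if nt - m ≤ y ∧ y ≤ nt ∧ y ≤ m then ε (m - y) else 0))
            = ∑ y ∈ Finset.range (m+1),
                (if nt - m ≤ y ∧ y ≤ nt ∧ y ≤ m then ε (m - y) else 0) := by
          rw [Finset.sum_subset (by intro y hy; simp only [Finset.mem_range] at *; omega :
              Finset.range (m+1) ⊆ Finset.range (2*m+1))]
          intro y hy hyn
          simp only [Finset.mem_range] at hy hyn
          rw [if_neg (by omega)]
        have A4 : (∑ y ∈ Finset.range (m+1),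
              (if nt - m ≤ y ∧ y ≤ nt ∧ y ≤ m then ε (m - y) else 0))
            = ∑ y ∈ Finset.range (m+1), (if n - m ≤ y ∧ y ≤ n ∧ y ≤ m then ε y else 0) := by
          rw [← Finset.sum_range_reflect
            (fun y => if nt - m ≤ y ∧ y ≤ nt ∧ y ≤ m then ε (m - y) else 0) (m+1)]
          apply Finset.sum_congr rfl
          intro y hy
          simp only [Finset.mem_range] at hy
          have hmy : m + 1 - 1 - y = m - y := by omega
          rw [hmy]
          have hiff : (nt - m ≤ m - y ∧ m - y ≤ nt ∧ m - y ≤ m) ↔ (n - m ≤ y ∧ y ≤ n ∧ y ≤ m) := by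
            omega
          rw [if_congr hiff rfl rfl]
          split_ifs with hc
          · rw [show m - (m - y) = y by omega]
          · rfl
        have A5 : (∑ y ∈ Finset.range (m+1), (if n - m ≤ y ∧ y ≤ n ∧ y ≤ m then ε y else 0))
            = ∑ y ∈ Finset.range (2*m+1), (if n - m ≤ y ∧ y ≤ n ∧ y ≤ m then ε y else 0) := by
          apply Finset.sum_subset
          · intro y hy; simp only [Finset.mem_range] at *; omega
          · intro y hy hyn
            simp only [Finset.mem_range] at hy hyn
            rw [if_neg (by omega)]
        have A6 : (∑ y ∈ Finset.range (2*m+1), (if n - m ≤ y ∧ y ≤ n ∧ y ≤ m then ε y else 0))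
            = ∑ y ∈ Finset.Ico (n - m) (n+1), ε y := by
          rw [← Finset.sum_subset (by intro y hy; simp only [Finset.mem_Ico, Finset.mem_range] at *; omega :
              Finset.Ico (n - m) (n+1) ⊆ Finset.range (2*m+1))
            (by intro y hy hyn; simp only [Finset.mem_Ico] at hyn; rw [if_neg (by omega)])]
          apply Finset.sum_congr rfl
          intro y hy
          simp only [Finset.mem_Ico] at hy
          by_cases hym : y ≤ m
          · rw [if_pos (by omega)]
          · rw [if_neg (by omega), S.hgt y (by omega)]
        rw [A1, A2, A3, A4, A5, A6]
      have B1 : (if m - r2 ≤ nt then (fun x => if x ≤ m then ε (m - x) else 0) (nt - (m - r2)) else 0)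
          = (if r2 ≤ n then ε (n - r2) else 0) := by
        show (if m - r2 ≤ nt then (if nt - (m - r2) ≤ m then ε (m - (nt - (m - r2))) else 0) else 0) = _
        by_cases c1 : m - r2 ≤ nt
        · by_cases c2 : nt - (m - r2) ≤ m
          · rw [if_pos c1, if_pos c2, if_pos (show r2 ≤ n by omega),
              show m - (nt - (m - r2)) = n - r2 by omega]
          · rw [if_pos c1, if_neg c2, if_neg (show ¬ r2 ≤ n by omega)]
        · rw [if_neg c1, if_pos (show r2 ≤ n by omega), S.hgt (n - r2) (by omega)]
      have B2 : (if m - r1 ≤ nt then (fun x => if x ≤ m then ε (m - x) else 0) (nt - (m - r1)) else 0)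
          = (if r1 ≤ n then ε (n - r1) else 0) := by
        show (if m - r1 ≤ nt then (if nt - (m - r1) ≤ m then ε (m - (nt - (m - r1))) else 0) else 0) = _
        by_cases c1 : m - r1 ≤ nt
        · by_cases c2 : nt - (m - r1) ≤ m
          · rw [if_pos c1, if_pos c2, if_pos (show r1 ≤ n by omega),
              show m - (nt - (m - r1)) = n - r1 by omega]
          · rw [if_pos c1, if_neg c2, if_neg (show ¬ r1 ≤ n by omega)]
        · rw [if_neg c1, if_pos (show r1 ≤ n by omega), S.hgt (n - r1) (by omega)]
      have RHSeq : (if 2 ∣ nt then (fun x => if x ≤ m then ε (m - x) else 0) (nt/2) else 0)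
          = (if 2 ∣ n then ε (n/2) else 0) := by
        show (if 2 ∣ nt then (if nt/2 ≤ m then ε (m - nt/2) else 0) else 0) = _
        by_cases h2 : 2 ∣ nt
        · have h2' : 2 ∣ n := by omega
          rw [if_pos h2, if_pos h2', if_pos (by omega : nt/2 ≤ m),
            show m - nt/2 = n/2 by omega]
        · rw [if_neg h2, if_neg (by omega : ¬ 2 ∣ n)]
      rw [hwin, B1, B2, RHSeq]
      linarith [h]
    · -- nt > 2m : everything vanishes
      have hz1 : (∑ j ∈ Finset.Ico (nt - m) (nt+1), (fun x => if x ≤ m then ε (m - x) else 0) j) = 0 := by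
        apply Finset.sum_eq_zero
        intro j hj
        simp only [Finset.mem_Ico] at hj
        rw [if_neg (by omega)]
      have hz2 : (if m - r2 ≤ nt then (fun x => if x ≤ m then ε (m - x) else 0) (nt - (m - r2)) else 0) = 0 := by
        rw [if_pos (by omega)]
        simp only
        rw [if_neg (by omega)]
      have hz3 : (if m - r1 ≤ nt then (fun x => if x ≤ m then ε (m - x) else 0) (nt - (m - r1)) else 0) = 0 := by
        rw [if_pos (by omega)]
        simp only
        rw [if_neg (by omega)]
      rw [hz1, hz2, hz3]
      have : (if 2 ∣ nt then (fun x => if x ≤ m then ε (m - x) else 0) (nt/2) else 0) = 0 := by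
        by_cases h2 : 2 ∣ nt
        · rw [if_pos h2]
          simp only
          rw [if_neg (by omega)]
        · rw [if_neg h2]
      rw [this]
      ring

/-- prefix of ε below r1 is (signed) Thue-Morse, with its partial sums. -/
lemma prefixTM (S : Sys m r1 r2 ε) :
    ∀ x, x < r1 → ε x = ε 0 * tm x ∧
      (∑ j ∈ Finset.range (x+1), ε j) = ε 0 * (if 2 ∣ x then tm x else 0) := by
  have h12 := S.h12
  have h2m := S.h2m
  intro x
  induction x using Nat.strong_induction_on with
  | _ x ih =>
    intro hx
    match x, hx with
    | 0, hx =>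
      constructor
      · rw [tm_zero]; ring
      · rw [if_pos (by omega : 2 ∣ 0), tm_zero]
        simp
    | (k+1), hx =>
      have hst := S.starE (k+1) (by omega)
      rw [if_neg (by omega : ¬ r1 ≤ k+1), if_neg (by omega : ¬ r2 ≤ k+1)] at hst
      simp only [add_zero] at hst
      have hEk := (ih k (by omega) (by omega)).2
      rcases Nat.even_or_odd (k+1) with ⟨q, hq⟩ | ⟨q, hq⟩
      · -- k+1 = 2q even, q ≥ 1, k = 2q-1 odd
        have hq1 : 1 ≤ q := by omega
        have hdvd : 2 ∣ (k+1) := by omega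
        have hdiv : (k+1)/2 = q := by omega
        rw [if_pos hdvd, hdiv] at hst
        have hIHq := (ih q (by omega) (by omega)).1
        have hkodd : ¬ 2 ∣ k := by omega
        rw [if_neg hkodd] at hEk
        have hE1 : (∑ j ∈ Finset.range (k+1+1), ε j) = ε 0 * tm (k+1) := by
          rw [hst, hIHq, show k + 1 = 2*q by omega, tm_two_mul]
        refine ⟨?_, ?_⟩
        · have hsucc : (∑ j ∈ Finset.range (k+1+1), ε j)
              = (∑ j ∈ Finset.range (k+1), ε j) + ε (k+1) := Finset.sum_range_succ _ _
          rw [hE1, hEk] at hsucc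
          linarith
        · rw [hE1, if_pos hdvd]
      · -- k+1 = 2q+1 odd, k = 2q even
        have hdvd : ¬ 2 ∣ (k+1) := by omega
        rw [if_neg hdvd] at hst
        have hkeven : 2 ∣ k := by omega
        rw [if_pos hkeven] at hEk
        refine ⟨?_, ?_⟩
        · have hsucc : (∑ j ∈ Finset.range (k+1+1), ε j)
              = (∑ j ∈ Finset.range (k+1), ε j) + ε (k+1) := Finset.sum_range_succ _ _
          rw [hst, hEk] at hsucc
          have htmk : tm k = tm q := by rw [show k = 2*q by omega, tm_two_mul]
          have htmk1 : tm (k+1) = -tm q := by rw [show k + 1 = 2*q+1 by omega, tm_two_mul_add_one]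
          rw [htmk1]
          rw [htmk] at hsucc
          linarith
        · rw [hst, if_neg hdvd]; ring

theorem core (S : Sys m r1 r2 ε) (heps0 : 0 < r1 → ε 0 = 1)
    (h5 : 2 ∣ r1) (h6 : r1 + r2 ≤ m) : r2 = r1 + 1 := by
  have h12 := S.h12
  have h2m := S.h2m
  -- r1 = 0 case
  rcases Nat.eq_zero_or_pos r1 with hr0 | hr0
  · subst hr0
    by_contra hne
    have hr22 : 2 ≤ r2 := by omega
    have hst := S.starE 1 (by omega)
    rw [if_pos (by omega : (0:ℕ) ≤ 1), if_neg (by omega : ¬ r2 ≤ 1),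
      if_neg (by omega : ¬ 2 ∣ 1)] at hst
    rw [Finset.sum_range_succ, Finset.sum_range_one] at hst
    have h00 : ε 0 = 0 := S.hz1
    have hpm1 := S.hpm 1 (by omega) (by omega) (by omega)
    rw [h00] at hst
    simp only [Nat.sub_zero] at hst
    omega
  have he0 : ε 0 = 1 := heps0 hr0
  -- prefix TM
  have hpre : ∀ x, x < r1 → ε x = tm x := by
    intro x hx
    have := (S.prefixTM x hx).1
    rw [he0] at this; linarith
  have hE : ∀ x, x < r1 → (∑ j ∈ Finset.range (x+1), ε j) = if 2 ∣ x then tm x else 0 := by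
    intro x hx
    have := (S.prefixTM x hx).2
    rw [he0] at this; linarith
  -- m is odd
  have hr2m' : r2 < m := by omega
  have hmodd : ¬ 2 ∣ m := by
    have hP := S.Esum_zero
    have hsq : (∑ j ∈ Finset.range (m+1), ε j * ε j) = (m : ℤ) - 1 := by
      have e : ∀ j ∈ Finset.range (m+1), ε j * ε j
          = 1 - (if j = r1 then (1:ℤ) else 0) - (if j = r2 then (1:ℤ) else 0) := by
        intro j hj
        simp only [Finset.mem_range] at hj
        by_cases hj1 : j = r1
        · subst hj1
          rw [S.hz1, if_pos rfl, if_neg (by omega)]; ring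
        by_cases hj2 : j = r2
        · subst hj2
          rw [S.hz2, if_neg (by omega), if_pos rfl]; ring
        · rcases S.hpm j (by omega) hj1 hj2 with h | h <;>
            rw [h, if_neg hj1, if_neg hj2] <;> ring
      rw [Finset.sum_congr rfl e]
      rw [Finset.sum_sub_distrib, Finset.sum_sub_distrib]
      rw [Finset.sum_ite_eq' (Finset.range (m+1)) r1 (fun _ => (1:ℤ)),
        Finset.sum_ite_eq' (Finset.range (m+1)) r2 (fun _ => (1:ℤ))]
      rw [if_pos (by simp; omega), if_pos (by simp; omega)]
      simp
    have heven : Even ((∑ j ∈ Finset.range (m+1), ε j * ε j)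
        - (∑ j ∈ Finset.range (m+1), ε j)) := by
      rw [← Finset.sum_sub_distrib]
      apply Finset.even_sum
      intro j _
      have : ε j * ε j - ε j = (ε j - 1) * ε j := by ring
      rw [this]
      have h2 := Int.even_mul_succ_self (ε j - 1)
      have : (ε j - 1) * (ε j - 1 + 1) = (ε j - 1) * ε j := by ring
      rwa [this] at h2
    rw [hsq, hP, sub_zero] at heven
    rcases heven with ⟨t, ht⟩
    intro ⟨w, hw⟩
    omega
  -- suffix TM
  have hsuf : ∀ x, x < m - r2 → ε (m - x) = ε m * tm x := by
    intro x hx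
    have T := S.reflect
    have := (T.prefixTM x (by omega)).1
    rw [if_pos (by omega : x ≤ m), if_pos (by omega : (0:ℕ) ≤ m)] at this
    rw [Nat.sub_zero] at this
    exact this
  have hsm : ε m * ε m = 1 := by
    rcases S.hpm m (le_refl m) (by omega) (by omega) with h | h <;> rw [h] <;> ring
  -- contradiction setup
  by_contra hne
  have hd2 : r1 + 2 ≤ r2 := by omega
  -- E (r1 - 1) = 0 and E r1 = 0
  have hEr1m : (∑ j ∈ Finset.range r1, ε j) = 0 := by
    have := hE (r1 - 1) (by omega)
    rw [if_neg (by omega : ¬ 2 ∣ (r1 - 1)), show r1 - 1 + 1 = r1 by omega] at this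
    exact this
  have hEr1 : (∑ j ∈ Finset.range (r1+1), ε j) = 0 := by
    rw [Finset.sum_range_succ, hEr1m, S.hz1]; ring
  -- tm (r1/2) = 1
  have hrho : tm (r1/2) = 1 := by
    have hst := S.starE r1 (by omega)
    rw [if_pos (le_refl r1), if_neg (by omega : ¬ r2 ≤ r1), if_pos h5,
      Nat.sub_self, he0, hEr1] at hst
    have hhalf : ε (r1/2) = tm (r1/2) := hpre (r1/2) (by omega)
    omega
  -- r1 ≥ 6
  have hr16 : 6 ≤ r1 := by
    by_contra hc
    have : r1 = 2 ∨ r1 = 4 := by omega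
    rcases this with h | h
    · rw [h] at hrho; norm_num [tm_one] at hrho
    · rw [h] at hrho; norm_num [tm_two] at hrho
  -- U-lemma
  have hU : ∀ j, r1 + j < r2 → (∑ jj ∈ Finset.range (r1 + j + 1), ε jj)
      = (if 2 ∣ j then ε (r1/2 + j/2) else 0) - ε j := by
    intro j hj
    have hst := S.starE (r1 + j) (by omega)
    rw [if_pos (by omega : r1 ≤ r1 + j), if_neg (by omega : ¬ r2 ≤ r1 + j),
      show r1 + j - r1 = j by omega] at hst
    by_cases h2j : 2 ∣ j
    · rw [if_pos (by omega : 2 ∣ (r1 + j)), show (r1+j)/2 = r1/2 + j/2 by omega] at hst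
      rw [if_pos h2j]
      linarith
    · rw [if_neg (by omega : ¬ 2 ∣ (r1 + j))] at hst
      rw [if_neg h2j]
      linarith
  -- u-values
  have huodd : ∀ j, 1 ≤ j → r1 + j < r2 → ¬ 2 ∣ j →
      ε (r1 + j) = ε (j-1) - ε (r1/2 + (j-1)/2) - ε j := by
    intro j h1 hj hodd
    have hA := hU j hj
    have hB := hU (j-1) (by omega)
    rw [if_neg hodd] at hA
    rw [if_pos (by omega : 2 ∣ (j-1))] at hB
    rw [Finset.sum_range_succ] at hA
    rw [show r1 + (j-1) + 1 = r1 + j by omega] at hB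
    rw [hB] at hA
    linarith
  have hueven : ∀ j, 2 ≤ j → r1 + j < r2 → 2 ∣ j →
      ε (r1 + j) = ε (r1/2 + j/2) - ε j + ε (j-1) := by
    intro j h1 hj heven
    have hA := hU j hj
    have hB := hU (j-1) (by omega)
    rw [if_pos heven] at hA
    rw [if_neg (by omega : ¬ 2 ∣ (j-1))] at hB
    rw [Finset.sum_range_succ] at hA
    rw [show r1 + (j-1) + 1 = r1 + j by omega] at hB
    rw [hB] at hA
    linarith
  -- bound d ≤ r1 - 1
  have hdr1 : r2 - r1 ≤ r1 - 1 := by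
    by_contra hc
    have hj : r1 + (r1 - 1) < r2 := by omega
    have hu := huodd (r1-1) (by omega) hj (by omega)
    have e1 : ε (r1 - 1 - 1) = tm (r1 - 2) := by
      rw [show r1-1-1 = r1-2 by omega]; exact hpre _ (by omega)
    have e2 : ε (r1/2 + (r1-1-1)/2) = tm (r1 - 1) := by
      rw [show r1/2 + (r1-1-1)/2 = r1 - 1 by omega]; exact hpre _ (by omega)
    have e3 : ε (r1 - 1) = tm (r1 - 1) := hpre _ (by omega)
    have t1 : tm (r1 - 1) = - tm (r1/2 - 1) := by
      rw [show r1 - 1 = 2*(r1/2 - 1) + 1 by omega, tm_two_mul_add_one]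
    have t2 : tm (r1 - 2) = tm (r1/2 - 1) := by
      rw [show r1 - 2 = 2*(r1/2 - 1) by omega, tm_two_mul]
    have hval := S.hpm (r1 + (r1 - 1)) (by omega) (by omega) (by omega)
    rcases tm_pm (r1/2 - 1) with h | h <;>
      (rw [e1, e2, e3, t1, t2, h] at hu; omega)
  -- Y family
  have hY : ∀ i, 1 ≤ i → 2*i + 1 ≤ r2 - r1 - 1 → tm (r1/2 + i) = tm i := by
    intro i h1 hi
    have hu := huodd (2*i+1) (by omega) (by omega) (by omega)
    have e1 : ε (2*i+1-1) = tm i := by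
      rw [show 2*i+1-1 = 2*i by omega, hpre _ (by omega), tm_two_mul]
    have e2 : ε (2*i+1) = tm (2*i+1) := hpre _ (by omega)
    have e3 : ε (r1/2 + (2*i+1-1)/2) = tm (r1/2 + i) := by
      rw [show (2*i+1-1)/2 = i by omega]
      exact hpre _ (by omega)
    have t1 : tm (2*i+1) = - tm i := tm_two_mul_add_one i
    have hval := S.hpm (r1 + (2*i+1)) (by omega) (by omega) (by omega)
    rw [e1, e2, e3, t1] at hu
    rcases tm_pm (r1/2 + i) with h | h <;> rcases tm_pm i with h' | h' <;>
      rw [h, h'] at hu ⊢ <;> omega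
  -- suffix family F1
  have hεm : ε m ≠ 0 := by intro h; rw [h] at hsm; norm_num at hsm
  have hF1 : ∀ K, 2*K + (r2 - r1) < r1 → tm ((r2 - r1) + 2*K) = - tm K := by
    intro K hK
    have hst := S.starHigh (r1 - 2*K) (by omega) (by omega)
    have hEpart : (∑ j ∈ Finset.range (r1 - 2*K), ε j) = 0 := by
      have := hE (r1 - 2*K - 1) (by omega)
      rw [if_neg (by omega : ¬ 2 ∣ (r1 - 2*K - 1)),
        show r1 - 2*K - 1 + 1 = r1 - 2*K by omega] at this
      exact this
    have hb1 : ε (m + (r1 - 2*K) - r1) = ε m * tm K := by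
      rw [show m + (r1 - 2*K) - r1 = m - 2*K by omega, hsuf (2*K) (by omega), tm_two_mul]
    have hb2 : ε (m + (r1 - 2*K) - r2) = ε m * tm ((r2 - r1) + 2*K) := by
      rw [show m + (r1 - 2*K) - r2 = m - ((r2 - r1) + 2*K) by omega, hsuf _ (by omega)]
    rw [hEpart, hb1, hb2, if_neg (by omega : ¬ 2 ∣ (m + (r1 - 2*K)))] at hst
    have h0 : ε m * (tm K + tm ((r2 - r1) + 2*K)) = 0 := by ring_nf; ring_nf at hst; linarith
    rcases mul_eq_zero.1 h0 with h | h
    · exact absurd h hεm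
    · linarith
  -- dagger family
  have hdag : ∀ j, ¬ 2 ∣ j → j ≤ r2 - r1 - 2 → tm j + ε m * tm (r2 - r1 - 1 - j) = 0 := by
    intro j hodd hj
    have hj1 : 1 ≤ j := by omega
    have hst := S.starHigh (r1 + 1 + j) (by omega) (by omega)
    have hEpart : (∑ jj ∈ Finset.range (r1 + 1 + j), ε jj) = - tm j := by
      have h := hU j (by omega)
      rw [if_neg hodd] at h
      rw [show r1 + 1 + j = r1 + j + 1 by omega, h, hpre j (by omega)]
      ring
    have hb1 : ε (m + (r1 + 1 + j) - r1) = 0 := S.hgt _ (by omega)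
    have hb2 : ε (m + (r1 + 1 + j) - r2) = ε m * tm (r2 - r1 - 1 - j) := by
      rw [show m + (r1 + 1 + j) - r2 = m - (r2 - r1 - 1 - j) by omega, hsuf _ (by omega)]
    rw [hEpart, hb1, hb2, if_neg (by omega : ¬ 2 ∣ (m + (r1 + 1 + j)))] at hst
    linarith
  by_cases hdpar : 2 ∣ (r2 - r1)
  · -- d even
    have hpow : ∃ k, r2 - r1 = 2^(k+1) := by
      by_cases hd4 : r2 - r1 = 2
      · exact ⟨0, by omega⟩
      · have hQ1 : 1 ≤ (r2 - r1 - 2)/2 := by omega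
        set Q := (r2 - r1 - 2)/2 with hQdef
        have hMlt : ∀ z, z < Q → tm (Q - z) = ε m * tm z := by
          intro z hz
          have hd := hdag (2*z+1) (by omega) (by omega)
          have tz : tm (2*z+1) = - tm z := tm_two_mul_add_one z
          have tQ : tm (r2 - r1 - 1 - (2*z+1)) = tm (Q - z) := by
            rw [show r2 - r1 - 1 - (2*z+1) = 2*(Q - z) by omega, tm_two_mul]
          rw [tz, tQ] at hd
          have hxx : ε m * tm (Q - z) = tm z := by linarith
          calc tm (Q - z) = (ε m * ε m) * tm (Q - z) := by rw [hsm]; ring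
            _ = ε m * tm z := by rw [mul_assoc, hxx]
        have hM : ∀ z ≤ Q, tm (Q - z) = ε m * tm z := by
          intro z hz
          rcases lt_or_eq_of_le hz with hlt | heq
          · exact hMlt z hlt
          · subst heq
            have h0 := hMlt 0 (by omega)
            rw [Nat.sub_zero, tm_zero, mul_one] at h0
            rw [Nat.sub_self, tm_zero, h0, hsm]
        obtain ⟨k, hkQ⟩ := tm_M_class Q (ε m) hM
        have p1 : (2:ℕ)^(k+1) = 2 * 2^k := by rw [pow_succ]; ring
        exact ⟨k, by omega⟩
    obtain ⟨k, hk⟩ := hpow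
    have p1 : (2:ℕ)^(k+1) = 2 * 2^k := by rw [pow_succ]; ring
    have hk1 : 1 ≤ 2^k := Nat.one_le_two_pow
    by_cases hbig : 2*(r2 - r1) < r1
    · -- F1 kill at K = 2^k
      have hf := hF1 (2^k) (by omega)
      have p2 : (2:ℕ)^(k+2) = 2 * 2^(k+1) := by rw [pow_succ]; ring
      have t2d : tm ((r2 - r1) + 2*2^k) = -1 := by
        rw [show (r2 - r1) + 2*2^k = 2^(k+2) by omega]
        exact tm_pow (k+2) (by omega)
      have tK : tm (2^k) = -1 := by
        rcases Nat.eq_zero_or_pos k with h | h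
        · subst h; norm_num [tm_one]
        · exact tm_pow k h
      rw [t2d, tK] at hf
      norm_num at hf
    · -- boss analysis
      have hklow : 2^k < r1/2 := by omega
      have hkup : r1/2 < 2^(k+1) := by
        rcases lt_or_eq_of_le (show r1/2 ≤ 2^(k+1) by omega) with h | h
        · exact h
        · exfalso
          rw [h] at hrho
          have := tm_pow (k+1) (by omega)
          omega
      set e := r1/2 - 2^k with hedef
      have he1 : 1 ≤ e := by omega
      have heup : e < 2^k := by omega
      have htme : tm e = -1 := by
        have h := tm_pow_add k e heup
        rw [show 2^k + e = r1/2 by omega, hrho] at h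
        omega
      have hS1 : ∀ i, i ≤ 2^k - e - 1 → tm (e + i) = - tm i := by
        intro i hi
        rcases Nat.eq_zero_or_pos i with h0 | h0
        · subst h0; rw [Nat.add_zero, tm_zero, htme]
        · have hyi := hY i h0 (by omega)
          rw [show r1/2 + i = 2^k + (e + i) by omega,
            tm_pow_add k (e+i) (by omega)] at hyi
          linarith
      have h2e : 2^k ≤ 2*e := by
        by_contra hc
        exact tm_S_kill e (2^k - e - 1) (by omega) hS1
      have hS2 : ∀ K, K ≤ 2^k - 1 - (2^k - e) → tm ((2^k - e) + K) = - tm K := by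
        intro K hK
        have hyi := hY ((2^k - e) + K) (by omega) (by omega)
        rw [show r1/2 + ((2^k - e) + K) = 2^(k+1) + K by omega,
          tm_pow_add (k+1) K (by omega)] at hyi
        linarith
      have h2c : 2*e ≤ 2^k := by
        by_contra hc
        exact tm_S_kill (2^k - e) (2^k - 1 - (2^k - e)) (by omega) hS2
      have heq : 2*e = 2^k := by omega
      -- boss: r1 = 6e, r2 = 10e
      have hr1e : r1 = 6*e := by omega
      have hr2e : r2 = 10*e := by omega
      have hkpos : 0 < k := by
        rcases Nat.eq_zero_or_pos k with h0 | h0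
        · exfalso; rw [h0, pow_zero] at heq; omega
        · exact h0
      -- equation at 2*r1
      have hstA := S.starE (2*r1) (by omega)
      rw [if_pos (by omega : r1 ≤ 2*r1), if_pos (by omega : r2 ≤ 2*r1),
        show 2*r1 - r1 = r1 by omega, S.hz1, if_pos (by omega : 2 ∣ 2*r1),
        show (2*r1)/2 = r1 by omega, S.hz1,
        show 2*r1 - r2 = 2*e by omega, hpre (2*e) (by omega),
        show (2:ℕ)*e = 2^k by omega] at hstA
      have tK : tm (2^k) = -1 := tm_pow k hkpos
      rw [tK] at hstA
      -- equation at 2*r1 + 1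
      have hstB := S.starE (2*r1+1) (by omega)
      rw [if_pos (by omega : r1 ≤ 2*r1+1), if_pos (by omega : r2 ≤ 2*r1+1),
        show 2*r1 + 1 - r1 = r1 + 1 by omega, if_neg (by omega : ¬ 2 ∣ (2*r1+1)),
        show 2*r1 + 1 - r2 = 2*e + 1 by omega, hpre (2*e+1) (by omega),
        show (2:ℕ)*e + 1 = 2^k + 1 by omega, tm_pow_add k 1 (by omega), tm_one] at hstB
      -- value of ε (r1+1)
      have hu1 : ε (r1 + 1) = 1 := by
        have h := huodd 1 (le_refl 1) (by omega) (by omega)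
        norm_num at h
        rw [he0, hpre 1 (by omega), tm_one, hpre (r1/2) (by omega), hrho] at h
        omega
      rw [hu1] at hstB
      rw [Finset.sum_range_succ] at hstB
      have hfin : ε (2*r1+1) = -3 := by omega
      have hval := S.hpm (2*r1+1) (by omega) (by omega) (by omega)
      omega
  · -- d odd
    have hEr2m1 := hU (r2 - r1 - 1) (by omega)
    rw [if_pos (by omega : 2 ∣ (r2 - r1 - 1)),
      show r1 + (r2 - r1 - 1) + 1 = r2 by omega] at hEr2m1
    have hst := S.starE r2 (by omega)
    rw [if_pos (by omega : r1 ≤ r2), if_pos (le_refl r2), Nat.sub_self, he0,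
      if_neg (by omega : ¬ 2 ∣ r2), Finset.sum_range_succ, S.hz2, hEr2m1] at hst
    have he1 : ε (r1/2 + (r2 - r1 - 1)/2) = tm (r1/2 + (r2 - r1 - 1)/2) :=
      hpre _ (by omega)
    have he2 : ε (r2 - r1 - 1) = tm (r2 - r1 - 1) := hpre _ (by omega)
    have he3 : ε (r2 - r1) = tm (r2 - r1) := hpre _ (by omega)
    set e := (r2 - r1 - 1)/2 with hee
    have t1 : tm (r2 - r1 - 1) = tm e := by
      rw [show r2 - r1 - 1 = 2*e by omega, tm_two_mul]
    have t2 : tm (r2 - r1) = - tm e := by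
      rw [show r2 - r1 = 2*e+1 by omega, tm_two_mul_add_one]
    rw [he1, he2, he3, t1, t2] at hst
    -- hst : tm (ρ + e) - tm e + (- tm e) + 1 = 0
    have htme : tm e = 1 := by
      rcases tm_pm e with h | h
      · exact h
      · exfalso; rcases tm_pm (r1/2 + e) with h' | h' <;> rw [h, h'] at hst <;> norm_num at hst
    -- M property
    set Q := (r2 - r1 - 3)/2 with hQ
    have hM : ∀ z ≤ Q, tm (Q - z) = (- ε m) * tm z := by
      intro z hz
      have hd := hdag (2*z+1) (by omega) (by omega)
      have tz : tm (2*z+1) = - tm z := tm_two_mul_add_one z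
      have tQ : tm (r2 - r1 - 1 - (2*z+1)) = - tm (Q - z) := by
        rw [show r2 - r1 - 1 - (2*z+1) = 2*(Q - z)+1 by omega, tm_two_mul_add_one]
      rw [tz, tQ] at hd
      have : ε m * tm (Q - z) = - tm z := by linarith
      have h2 : ε m * (ε m * tm (Q - z)) = ε m * (- tm z) := by rw [this]
      rw [← mul_assoc, hsm, one_mul] at h2
      rw [h2]; ring
    obtain ⟨k, hk⟩ := tm_M_class Q (- ε m) hM
    -- e = Q + 1 = 2^k, but tm e = 1 while tm (2^k) = -1
    have hek : e = 2^k := by omega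
    have : tm e = -1 := by
      rcases Nat.eq_zero_or_pos k with hk0 | hk0
      · rw [hek, hk0]; norm_num [tm_one]
      · rw [hek]; exact tm_pow k hk0
    omega
end Sys

open scoped Classical in
noncomputable def chi (T : Set ℕ) (n : ℕ) : ℤ := if n ∈ T then 1 else 0

open scoped Classical in
lemma R_count (T : Set ℕ) (n : ℕ) :
    (∑ j ∈ Finset.range (n+1), chi T j * chi T (n - j))
      = 2 * (R T n : ℤ) + (if 2 ∣ n ∧ (n/2) ∈ T then 1 else 0) := by
  classical
  set P := (Finset.range (n+1)).filter (fun j => j ∈ T ∧ (n - j) ∈ T) with hP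
  have hsum : (∑ j ∈ Finset.range (n+1), chi T j * chi T (n - j)) = (P.card : ℤ) := by
    rw [hP, ← Finset.sum_boole]
    apply Finset.sum_congr rfl
    intro j _
    unfold chi
    by_cases h1 : j ∈ T <;> by_cases h2 : (n - j) ∈ T <;>
      simp [h1, h2]
  have hR : (R T n : ℤ) = ((P.filter (fun j => 2*j < n)).card : ℤ) := by
    have hset : {p : ℕ × ℕ | p.1 ∈ T ∧ p.2 ∈ T ∧ p.1 < p.2 ∧ p.1 + p.2 = n}
        = ↑((P.filter (fun j => 2*j < n)).image (fun j => (j, n - j))) := by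
      ext ⟨a, b⟩
      simp only [Set.mem_setOf_eq, Finset.coe_image, Set.mem_image, Finset.mem_coe,
        Finset.mem_filter, Finset.mem_range, hP]
      constructor
      · rintro ⟨ha, hb, hab, habn⟩
        refine ⟨a, ⟨⟨by omega, ha, ?_⟩, by omega⟩, ?_⟩
        · rw [show n - a = b by omega]; exact hb
        · rw [show n - a = b by omega]
      · rintro ⟨j, ⟨⟨⟨hj1, hj2, hj3⟩, hj4⟩, heq⟩⟩
        injection heq with e1 e2
        subst e1; subst e2
        exact ⟨hj2, hj3, by omega, by omega⟩
    unfold R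
    rw [hset, Set.ncard_coe_finset, Finset.card_image_of_injOn]
    intro a _ b _ hab
    exact (Prod.mk.injEq _ _ _ _ ▸ hab).1
  have hgtlt : (P.filter (fun j => n < 2*j)).card = (P.filter (fun j => 2*j < n)).card := by
    apply Finset.card_bij' (fun j _ => n - j) (fun j _ => n - j)
    · intro a ha
      simp only [Finset.mem_filter, Finset.mem_range, hP] at ha ⊢
      refine ⟨⟨by omega, ha.1.2.2, ?_⟩, by omega⟩
      rw [show n - (n - a) = a by omega]
      exact ha.1.2.1
    · intro a ha
      simp only [Finset.mem_filter, Finset.mem_range, hP] at ha ⊢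
      refine ⟨⟨by omega, ha.1.2.2, ?_⟩, by omega⟩
      rw [show n - (n - a) = a by omega]
      exact ha.1.2.1
    · intro a ha
      simp only [Finset.mem_filter, Finset.mem_range, hP] at ha
      omega
    · intro a ha
      simp only [Finset.mem_filter, Finset.mem_range, hP] at ha
      omega
  have hcards : P.card = (P.filter (fun j => 2*j < n)).card
      + (P.filter (fun j => 2*j = n)).card + (P.filter (fun j => n < 2*j)).card := by
    have h1 := Finset.card_filter_add_card_filter_not
      (s := P) (p := fun j => 2*j < n)
    have h2 := Finset.card_filter_add_card_filter_not
      (s := P.filter (fun j => ¬ 2*j < n)) (p := fun j => 2*j = n)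
    have e1 : (P.filter (fun j => ¬ 2*j < n)).filter (fun j => 2*j = n)
        = P.filter (fun j => 2*j = n) := by
      rw [Finset.filter_filter]
      apply Finset.filter_congr
      intro x _
      constructor
      · exact fun h => h.2
      · exact fun h => ⟨by omega, h⟩
    have e2 : (P.filter (fun j => ¬ 2*j < n)).filter (fun j => ¬ 2*j = n)
        = P.filter (fun j => n < 2*j) := by
      rw [Finset.filter_filter]
      apply Finset.filter_congr
      intro x _
      constructor
      · exact fun h => by omega
      · exact fun h => ⟨by omega, by omega⟩
    rw [e1, e2] at h2
    omega
  have hdiag : ((P.filter (fun j => 2*j = n)).card : ℤ)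
      = (if 2 ∣ n ∧ (n/2) ∈ T then 1 else 0) := by
    by_cases hc : 2 ∣ n ∧ (n/2) ∈ T
    · rw [if_pos hc]
      have he : P.filter (fun j => 2*j = n) = {n/2} := by
        ext j
        simp only [Finset.mem_filter, Finset.mem_range, Finset.mem_singleton, hP]
        constructor
        · rintro ⟨⟨_, _, _⟩, h4⟩; omega
        · intro h
          subst h
          refine ⟨⟨by omega, hc.2, ?_⟩, by omega⟩
          rw [show n - n/2 = n/2 by omega]
          exact hc.2
      rw [he]; simp
    · rw [if_neg hc]
      have he : P.filter (fun j => 2*j = n) = ∅ := by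
        ext j
        simp only [Finset.mem_filter, Finset.mem_range, Finset.notMem_empty, iff_false, hP]
        rintro ⟨⟨hj1, hj2, hj3⟩, hj4⟩
        apply hc
        refine ⟨by omega, ?_⟩
        rw [show n/2 = j by omega]
        exact hj2
      rw [he]; simp
  rw [hsum, hR, hcards]
  push_cast
  omega

theorem stmt15 (m r1 r2 : ℕ) (hm : 3 ≤ m) (C D : Set ℕ)
    (h1 : C ∪ D = Set.Icc 0 m) (h2 : C ∩ D = {r1, r2}) (h3 : r1 < r2)
    (h4 : (0 : ℕ) ∈ C) (h5 : Even r1) (h6 : r1 + r2 ≤ m)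
    (h7 : ∀ n : ℕ, R C n = R D n) :
    r2 = r1 + 1 := by
  classical
  have hr1CD : r1 ∈ C ∩ D := by rw [h2]; left; rfl
  have hr2CD : r2 ∈ C ∩ D := by rw [h2]; right; rfl
  have hIcc : ∀ n, n ∈ C ∪ D ↔ (n ≤ m) := by
    intro n
    rw [h1]
    simp [Set.mem_Icc]
  have hr2m : r2 ≤ m := (hIcc r2).1 (Or.inl hr2CD.1)
  have hCD : ∀ n, n ∈ C → n ∈ D → (n = r1 ∨ n = r2) := by
    intro n hc hd
    have h : n ∈ C ∩ D := ⟨hc, hd⟩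
    rw [h2] at h
    simpa using h
  have hwt : ∀ i, wt m r1 r2 i = chi C i + chi D i := by
    intro i
    unfold wt chi
    by_cases him : i ≤ m
    · by_cases hiC : i ∈ C <;> by_cases hiD : i ∈ D
      · rcases hCD i hiC hiD with rfl | rfl
        · rw [if_pos him, if_pos rfl, if_neg (by omega : ¬ i = r2), if_pos hiC, if_pos hiD]
          norm_num
        · rw [if_pos him, if_neg (by omega : ¬ i = r1), if_pos rfl, if_pos hiC, if_pos hiD]
          norm_num
      · have e1 : i ≠ r1 := fun h => hiD (h ▸ hr1CD.2)
        have e2 : i ≠ r2 := fun h => hiD (h ▸ hr2CD.2)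
        rw [if_pos him, if_neg e1, if_neg e2, if_pos hiC, if_neg hiD]
        norm_num
      · have e1 : i ≠ r1 := fun h => hiC (h ▸ hr1CD.1)
        have e2 : i ≠ r2 := fun h => hiC (h ▸ hr2CD.1)
        rw [if_pos him, if_neg e1, if_neg e2, if_neg hiC, if_pos hiD]
        norm_num
      · exfalso
        have := (hIcc i).2 him
        rcases this with h | h
        · exact hiC h
        · exact hiD h
    · have hiC : i ∉ C := fun h => him ((hIcc i).1 (Or.inl h))
      have hiD : i ∉ D := fun h => him ((hIcc i).1 (Or.inr h))
      rw [if_neg him, if_neg (by omega : ¬ i = r1), if_neg (by omega : ¬ i = r2),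
        if_neg hiC, if_neg hiD]
      norm_num
  set ε : ℕ → ℤ := fun n => chi C n - chi D n with hεdef
  have hstar : ∀ n, (∑ j ∈ Finset.range (n+1), wt m r1 r2 (n - j) * ε j)
      = if 2 ∣ n then ε (n/2) else 0 := by
    intro n
    have hrefl : (∑ j ∈ Finset.range (n+1), wt m r1 r2 (n - j) * ε j)
        = ∑ j ∈ Finset.range (n+1), wt m r1 r2 j * ε (n - j) := by
      rw [← Finset.sum_range_reflect (fun j => wt m r1 r2 j * ε (n - j)) (n+1)]
      apply Finset.sum_congr rfl
      intro j hj
      simp only [Finset.mem_range] at hj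
      rw [show n + 1 - 1 - j = n - j by omega, show n - (n - j) = j by omega]
    have hcross : (∑ j ∈ Finset.range (n+1), chi D j * chi C (n - j))
        = ∑ j ∈ Finset.range (n+1), chi C j * chi D (n - j) := by
      rw [← Finset.sum_range_reflect (fun j => chi C j * chi D (n - j)) (n+1)]
      apply Finset.sum_congr rfl
      intro j hj
      simp only [Finset.mem_range] at hj
      rw [show n + 1 - 1 - j = n - j by omega, show n - (n - j) = j by omega]
      ring
    have hexpand : (∑ j ∈ Finset.range (n+1), wt m r1 r2 j * ε (n - j))
        = (∑ j ∈ Finset.range (n+1), chi C j * chi C (n - j))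
          - (∑ j ∈ Finset.range (n+1), chi D j * chi D (n - j))
          + ((∑ j ∈ Finset.range (n+1), chi D j * chi C (n - j))
            - (∑ j ∈ Finset.range (n+1), chi C j * chi D (n - j))) := by
      rw [← Finset.sum_sub_distrib, ← Finset.sum_sub_distrib, ← Finset.sum_add_distrib]
      apply Finset.sum_congr rfl
      intro j _
      rw [hwt j]
      simp only [hεdef]
      ring
    rw [hrefl, hexpand, hcross, sub_self, add_zero, R_count C n, R_count D n, h7 n]
    by_cases hdvd : 2 ∣ n
    · rw [if_pos hdvd]
      simp only [hεdef]
      unfold chi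
      by_cases hc : n/2 ∈ C <;> by_cases hd : n/2 ∈ D <;>
        simp [hc, hd, hdvd]
    · rw [if_neg hdvd]
      have e1 : ¬ (2 ∣ n ∧ n/2 ∈ C) := fun h => hdvd h.1
      have e2 : ¬ (2 ∣ n ∧ n/2 ∈ D) := fun h => hdvd h.1
      rw [if_neg e1, if_neg e2]
      ring
  have hS : Sys m r1 r2 ε := by
    refine ⟨h3, hr2m, ?_, ?_, ?_, ?_, hstar⟩
    · intro n hn hn1 hn2
      simp only [hεdef]
      unfold chi
      by_cases hiC : n ∈ C <;> by_cases hiD : n ∈ D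
      · rcases hCD n hiC hiD with h | h <;> omega
      · left; rw [if_pos hiC, if_neg hiD]; ring
      · right; rw [if_neg hiC, if_pos hiD]; ring
      · exfalso
        rcases (hIcc n).2 hn with h | h
        · exact hiC h
        · exact hiD h
    · simp only [hεdef]
      unfold chi
      rw [if_pos hr1CD.1, if_pos hr1CD.2]
      ring
    · simp only [hεdef]
      unfold chi
      rw [if_pos hr2CD.1, if_pos hr2CD.2]
      ring
    · intro n hn
      have hiC : n ∉ C := fun h => (by omega : ¬ n ≤ m) ((hIcc n).1 (Or.inl h))
      have hiD : n ∉ D := fun h => (by omega : ¬ n ≤ m) ((hIcc n).1 (Or.inr h))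
      simp only [hεdef]
      unfold chi
      rw [if_neg hiC, if_neg hiD]
      ring
  apply hS.core
  · intro hr0
    have h0D : (0:ℕ) ∉ D := by
      intro h0
      rcases hCD 0 h4 h0 with h | h <;> omega
    simp only [hεdef]
    unfold chi
    rw [if_pos h4, if_neg h0D]
    ring
  · exact h5.two_dvd
  · exact h6
end

section
/- Let m ≥ 3 and suppose C ∪ D = [0, m], C ∩ D = {r_1, r_2} with r_1 < r_2 ≤ m, 0 ∈ C, and R_C(n) = R_D(n) for all n ≤ m. Then C ∩ [0, r_1 − 1] = A ∩ [0, r_1 − 1] and D ∩ [0, r_1 − 1] = B ∩ [0, r_1 − 1]. -/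
open Set

open Finset in
open scoped Classical in
lemma R_eq_s16 (S : Set ℕ) (n : ℕ) :
    ∑ i ∈ Finset.range (n+1), ((if i ∈ S then (1:ℤ) else 0) * (if (n - i) ∈ S then 1 else 0))
    = 2 * (R S n : ℤ) + (if Even n ∧ n / 2 ∈ S then 1 else 0) := by
  classical
  set G : Finset ℕ := (Finset.range (n+1)).filter (fun i => i ∈ S ∧ (n - i) ∈ S ∧ 2*i < n)
    with hG
  have hR : R S n = G.card := by
    have hset : {p : ℕ × ℕ | p.1 ∈ S ∧ p.2 ∈ S ∧ p.1 < p.2 ∧ p.1 + p.2 = n}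
        = ↑(G.image (fun i => (i, n - i))) := by
      ext ⟨a, b⟩
      simp only [Set.mem_setOf_eq, Finset.coe_image, Set.mem_image, Finset.mem_coe,
        Finset.mem_filter, Finset.mem_range, hG, Prod.mk.injEq]
      constructor
      · rintro ⟨ha, hb, hab, hs⟩
        exact ⟨a, ⟨by omega, ha, by rw [show n - a = b by omega]; exact hb, by omega⟩,
          rfl, by omega⟩
      · rintro ⟨i, ⟨hi1, hi2, hi3, hi4⟩, rfl, rfl⟩
        exact ⟨hi2, hi3, by omega, by omega⟩
    rw [R, hset, Set.ncard_coe_finset, Finset.card_image_of_injective]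
    intro a b hab; exact (Prod.mk.injEq _ _ _ _ ▸ hab).1
  set f : ℕ → ℤ := fun i => (if i ∈ S then (1:ℤ) else 0) * (if (n - i) ∈ S then 1 else 0)
    with hf
  have hsplit : ∑ i ∈ range (n+1), f i =
      (∑ i ∈ (range (n+1)).filter (fun i => 2*i < n), f i)
      + (∑ i ∈ (range (n+1)).filter (fun i => ¬ 2*i < n ∧ 2*i ≤ n), f i)
      + (∑ i ∈ (range (n+1)).filter (fun i => ¬ 2*i < n ∧ ¬ 2*i ≤ n), f i) := by
    rw [← Finset.sum_filter_add_sum_filter_not (range (n+1)) (fun i => 2*i < n) f,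
      ← Finset.sum_filter_add_sum_filter_not ((range (n+1)).filter (fun i => ¬ 2*i < n))
        (fun i => 2*i ≤ n) f]
    simp only [Finset.filter_filter]
    ring
  have h1 : ∑ i ∈ (range (n+1)).filter (fun i => 2*i < n), f i = G.card := by
    rw [Finset.sum_congr rfl (g := fun i => if i ∈ S ∧ (n - i) ∈ S then (1:ℤ) else 0)
      (fun i _ => by by_cases h1 : i ∈ S <;> by_cases h2 : (n - i) ∈ S <;>
        simp [hf, h1, h2]),
      Finset.sum_boole]
    have : Finset.filter (fun i => i ∈ S ∧ (n-i) ∈ S) ((range (n+1)).filter (fun i => 2*i < n)) = G := by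
      rw [hG, Finset.filter_filter]
      ext a
      simp only [Finset.mem_filter, Finset.mem_range]
      tauto
    rw [this]
  have h3 : ∑ i ∈ (range (n+1)).filter (fun i => ¬ 2*i < n ∧ ¬ 2*i ≤ n), f i
      = ∑ i ∈ (range (n+1)).filter (fun i => 2*i < n), f i := by
    apply Finset.sum_nbij' (i := fun a => n - a) (j := fun a => n - a)
    · intro a ha; simp only [Finset.mem_filter, Finset.mem_range] at *; omega
    · intro a ha; simp only [Finset.mem_filter, Finset.mem_range] at *; omega
    · intro a ha; simp only [Finset.mem_filter, Finset.mem_range] at *; omega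
    · intro a ha; simp only [Finset.mem_filter, Finset.mem_range] at *; omega
    · intro a ha
      simp only [Finset.mem_filter, Finset.mem_range] at ha
      rw [hf]
      simp only []
      rw [show n - (n - a) = a by omega, mul_comm]
  have h2 : ∑ i ∈ (range (n+1)).filter (fun i => ¬ 2*i < n ∧ 2*i ≤ n), f i
      = if Even n ∧ n / 2 ∈ S then 1 else 0 := by
    rcases Nat.even_or_odd n with he | ho
    · obtain ⟨k, hk⟩ := he
      have hfe : (range (n+1)).filter (fun i => ¬ 2*i < n ∧ 2*i ≤ n) = {k} := by
        ext a; simp only [Finset.mem_filter, Finset.mem_range, Finset.mem_singleton]; omega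
      have hEn : Even n := ⟨k, hk⟩
      rw [hfe, Finset.sum_singleton, hf]
      simp only []
      rw [show n - k = k by omega, show n / 2 = k by omega]
      by_cases hS : k ∈ S <;> simp [hS, hEn]
    · obtain ⟨k, hk⟩ := ho
      have hfe : (range (n+1)).filter (fun i => ¬ 2*i < n ∧ 2*i ≤ n) = ∅ := by
        ext a; simp only [Finset.mem_filter, Finset.mem_range, Finset.notMem_empty,
          iff_false, not_and]; omega
      rw [hfe, Finset.sum_empty,
        if_neg (by rintro ⟨he, -⟩; obtain ⟨j, hj⟩ := he; omega)]
  rw [hsplit, h1, h2, h3, h1, hR]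
  push_cast
  ring

lemma A_zero : (0 : ℕ) ∈ A := by simp [A]

lemma A_two (k : ℕ) (hk : 0 < k) : 2 * k ∈ A ↔ k ∈ A := by
  have h : Nat.digits 2 (2 * k) = 0 :: Nat.digits 2 k := by
    rw [Nat.digits_def' (by norm_num : 1 < 2) (by omega)]
    congr 1
    · omega
    · congr 1; omega
  simp only [A, Set.mem_setOf_eq]
  rw [h]
  simp

lemma A_odd (k : ℕ) : 2 * k + 1 ∈ A ↔ k ∉ A := by
  have h : Nat.digits 2 (2 * k + 1) = 1 :: Nat.digits 2 k := by
    rw [Nat.digits_def' (by norm_num : 1 < 2) (by omega)]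
    congr 1
    · omega
    · congr 1; omega
  simp only [A, Set.mem_setOf_eq]
  rw [h]
  simp [List.count_cons, Nat.even_add_one]

theorem stmt16 (m r1 r2 : ℕ) (hm : 3 ≤ m) (C D : Set ℕ)
    (h1 : C ∪ D = Set.Icc 0 m) (h2 : C ∩ D = {r1, r2}) (h3 : r1 < r2) (h4 : r2 ≤ m)
    (h5 : (0 : ℕ) ∈ C) (h6 : ∀ n ≤ m, R C n = R D n) :
    C ∩ Set.Icc 0 (r1 - 1) = A ∩ Set.Icc 0 (r1 - 1) ∧
    D ∩ Set.Icc 0 (r1 - 1) = B ∩ Set.Icc 0 (r1 - 1) := by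
  classical
  have hr1m : r1 < m := by omega
  -- every i ≤ m is in C or D
  have hmem : ∀ i : ℕ, i ≤ m → i ∈ C ∨ i ∈ D := by
    intro i hi
    have : i ∈ C ∪ D := by rw [h1]; exact Set.mem_Icc.mpr ⟨Nat.zero_le _, hi⟩
    exact this
  -- below r1, not in both
  have hD_iff : ∀ i : ℕ, i < r1 → (i ∈ D ↔ i ∉ C) := by
    intro i hi
    have hnb : ¬ (i ∈ C ∧ i ∈ D) := by
      intro hic
      have : i ∈ ({r1, r2} : Set ℕ) := by
        rw [← h2]; exact ⟨hic.1, hic.2⟩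
      simp only [Set.mem_insert_iff, Set.mem_singleton_iff] at this
      omega
    have hor := hmem i (by omega)
    tauto
  -- master equation
  have hmaster : ∀ n : ℕ, n < r1 →
      ∑ i ∈ Finset.range (n+1), (if i ∈ C then (1:ℤ) else -1)
      = if Even n then (if n / 2 ∈ C then (1:ℤ) else -1) else 0 := by
    intro n hn
    have hEC := R_eq_s16 C n
    have hED := R_eq_s16 D n
    have h6n : (R C n : ℤ) = R D n := by exact_mod_cast h6 n (by omega)
    have key : ∀ i ∈ Finset.range (n+1),
        2 * ((if i ∈ C then (1:ℤ) else 0) * (if (n - i) ∈ C then 1 else 0)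
          - (if i ∈ D then (1:ℤ) else 0) * (if (n - i) ∈ D then 1 else 0))
        = (if i ∈ C then (1:ℤ) else -1) + (if (n - i) ∈ C then (1:ℤ) else -1) := by
      intro i hi
      rw [Finset.mem_range] at hi
      have hd1 := hD_iff i (by omega)
      have hd2 := hD_iff (n - i) (by omega)
      by_cases hic : i ∈ C <;> by_cases hjc : (n - i) ∈ C <;>
        simp [hic, hjc, hd1, hd2]
    have hsum : 2 * ((∑ i ∈ Finset.range (n+1),
          ((if i ∈ C then (1:ℤ) else 0) * (if (n - i) ∈ C then 1 else 0)))
        - (∑ i ∈ Finset.range (n+1),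
          ((if i ∈ D then (1:ℤ) else 0) * (if (n - i) ∈ D then 1 else 0))))
        = ∑ i ∈ Finset.range (n+1),
          ((if i ∈ C then (1:ℤ) else -1) + (if (n - i) ∈ C then (1:ℤ) else -1)) := by
      rw [← Finset.sum_sub_distrib, Finset.mul_sum]
      exact Finset.sum_congr rfl key
    have hrefl : ∑ i ∈ Finset.range (n+1), (if (n - i) ∈ C then (1:ℤ) else -1)
        = ∑ i ∈ Finset.range (n+1), (if i ∈ C then (1:ℤ) else -1) := by
      have := Finset.sum_range_reflect (fun i => if i ∈ C then (1:ℤ) else -1) (n+1)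
      simpa using this
    have hsum2 : ∑ i ∈ Finset.range (n+1),
          ((if i ∈ C then (1:ℤ) else -1) + (if (n - i) ∈ C then (1:ℤ) else -1))
        = 2 * ∑ i ∈ Finset.range (n+1), (if i ∈ C then (1:ℤ) else -1) := by
      rw [Finset.sum_add_distrib, hrefl]; ring
    have hEe : (if Even n ∧ n / 2 ∈ C then (1:ℤ) else 0)
        - (if Even n ∧ n / 2 ∈ D then (1:ℤ) else 0)
        = if Even n then (if n / 2 ∈ C then (1:ℤ) else -1) else 0 := by
      by_cases hev : Even n
      · have hd := hD_iff (n / 2) (by omega)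
        by_cases hc : n / 2 ∈ C <;> simp [hev, hc, hd]
      · simp [hev]
    have h2ne : (2:ℤ) ≠ 0 := by norm_num
    apply mul_left_cancel₀ h2ne
    rw [← hsum2, ← hsum, hEC, hED, h6n, ← hEe]
    ring
  -- r1 is positive
  have hr1 : 0 < r1 := by
    by_contra hcon
    have hr10 : r1 = 0 := by omega
    have h0D : (0 : ℕ) ∈ D := by
      have : (0:ℕ) ∈ C ∩ D := by rw [h2, hr10]; left; rfl
      exact this.2
    have h12 : (1 : ℕ) ∈ C ↔ 1 ∈ D := by
      have h61 : (R C 1 : ℤ) = R D 1 := by exact_mod_cast h6 1 (by omega)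
      have e1C := R_eq_s16 C 1
      have e1D := R_eq_s16 D 1
      by_cases hc : (1:ℕ) ∈ C <;> by_cases hd : (1:ℕ) ∈ D <;>
        [skip; skip; skip; skip] <;>
        simp [Finset.sum_range_succ, h5, h0D, hc, hd,
          (by decide : ¬ Even 1)] at e1C e1D <;>
        first
          | (exact iff_of_true hc hd)
          | (exact iff_of_false hc hd)
          | omega
    have h1CD : (1:ℕ) ∈ C ∧ (1:ℕ) ∈ D := by
      rcases hmem 1 (by omega) with h | h
      · exact ⟨h, h12.mp h⟩
      · exact ⟨h12.mpr h, h⟩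
    have hr2 : r2 = 1 := by
      have : (1:ℕ) ∈ ({r1, r2} : Set ℕ) := by rw [← h2]; exact ⟨h1CD.1, h1CD.2⟩
      simp only [Set.mem_insert_iff, Set.mem_singleton_iff] at this
      omega
    have h22 : (2 : ℕ) ∈ C ↔ 2 ∈ D := by
      have h62 : (R C 2 : ℤ) = R D 2 := by exact_mod_cast h6 2 (by omega)
      have e2C := R_eq_s16 C 2
      have e2D := R_eq_s16 D 2
      by_cases hc : (2:ℕ) ∈ C <;> by_cases hd : (2:ℕ) ∈ D <;>
        [skip; skip; skip; skip] <;>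
        simp [Finset.sum_range_succ, h5, h0D, h1CD.1, h1CD.2, hc, hd,
          (by decide : Even 2)] at e2C e2D <;>
        first
          | (exact iff_of_true hc hd)
          | (exact iff_of_false hc hd)
          | omega
    have h2CD : (2:ℕ) ∈ C ∧ (2:ℕ) ∈ D := by
      rcases hmem 2 (by omega) with h | h
      · exact ⟨h, h22.mp h⟩
      · exact ⟨h22.mpr h, h⟩
    have : (2:ℕ) ∈ ({r1, r2} : Set ℕ) := by rw [← h2]; exact ⟨h2CD.1, h2CD.2⟩
    simp only [Set.mem_insert_iff, Set.mem_singleton_iff] at this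
    omega
  -- the key inductive claim
  have hxA : ∀ n : ℕ, n < r1 →
      (if n ∈ C then (1:ℤ) else -1) = (if n ∈ A then (1:ℤ) else -1) := by
    intro n
    induction n using Nat.strong_induction_on with
    | _ n ih =>
      intro hn
      rcases Nat.eq_zero_or_pos n with rfl | hnpos
      · simp [h5, A_zero]
      have hsucc : ∀ j : ℕ, 0 < j → j < r1 →
          ∑ i ∈ Finset.range (j+1), (if i ∈ C then (1:ℤ) else -1)
          = (∑ i ∈ Finset.range ((j-1)+1), (if i ∈ C then (1:ℤ) else -1))
            + (if j ∈ C then (1:ℤ) else -1) := by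
        intro j hj0 hj
        rw [show (j-1)+1 = j by omega]
        exact Finset.sum_range_succ _ j
      rcases Nat.even_or_odd n with ⟨k, hk⟩ | ⟨k, hk⟩
      · -- n = k + k, k ≥ 1
        have hk1 : 1 ≤ k := by omega
        have hm1 := hmaster n hn
        have hm2 := hmaster (n-1) (by omega)
        have hev : Even n := ⟨k, hk⟩
        simp only [hev, if_true, show n / 2 = k from by omega] at hm1
        rw [if_neg (by rintro ⟨j, hj⟩; omega)] at hm2
        have hT := hsucc n hnpos hn
        have hrec : (if n ∈ C then (1:ℤ) else -1) = (if k ∈ C then (1:ℤ) else -1) := by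
          rw [hT, hm2] at hm1
          linarith
        have hnA : n ∈ A ↔ k ∈ A := by
          rw [show n = 2 * k by omega]; exact A_two k hk1
        rw [hrec, ih k (by omega) (by omega)]
        by_cases hkA : k ∈ A <;> simp [hkA, hnA]
      · -- n = 2k + 1
        have hm1 := hmaster n hn
        have hm2 := hmaster (n-1) (by omega)
        rw [if_neg (by rintro ⟨j, hj⟩; omega)] at hm1
        have hev : Even (n-1) := ⟨k, by omega⟩
        simp only [hev, if_true, show (n-1) / 2 = k from by omega] at hm2
        have hT := hsucc n hnpos hn
        have hrec : (if n ∈ C then (1:ℤ) else -1) = -(if k ∈ C then (1:ℤ) else -1) := by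
          rw [hT, hm2] at hm1
          linarith
        have hnA : n ∈ A ↔ k ∉ A := by
          rw [show n = 2 * k + 1 by omega]; exact A_odd k
        rw [hrec, ih k (by omega) (by omega)]
        by_cases hkA : k ∈ A <;> simp [hkA, hnA]
  have hCA : ∀ j : ℕ, j ≤ r1 - 1 → (j ∈ C ↔ j ∈ A) := by
    intro j hj
    have := hxA j (by omega)
    by_cases hc : j ∈ C <;> by_cases ha : j ∈ A <;> simp [hc, ha] at this ⊢ <;> omega
  constructor
  · ext j
    simp only [Set.mem_inter_iff, Set.mem_Icc]
    constructor
    · rintro ⟨hc, h0, hj⟩; exact ⟨(hCA j hj).mp hc, h0, hj⟩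
    · rintro ⟨ha, h0, hj⟩; exact ⟨(hCA j hj).mpr ha, h0, hj⟩
  · ext j
    simp only [Set.mem_inter_iff, Set.mem_Icc]
    constructor
    · rintro ⟨hd, h0, hj⟩
      refine ⟨?_, h0, hj⟩
      have : j ∉ C := (hD_iff j (by omega)).mp hd
      simp only [B, Set.mem_compl_iff]
      exact fun ha => this ((hCA j hj).mpr ha)
    · rintro ⟨hb, h0, hj⟩
      refine ⟨?_, h0, hj⟩
      simp only [B, Set.mem_compl_iff] at hb
      exact (hD_iff j (by omega)).mpr (fun hc => hb ((hCA j hj).mp hc))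
end

section
/- For a positive integer k and the sets A_k, B_k, the reflection map x ↦ 2^k − 1 − x maps A_k onto A_k and B_k onto B_k if k is even, and maps A_k onto B_k and B_k onto A_k if k is odd. -/
/-!
Subtracting `x < 2 ^ k` from `2 ^ k - 1 = 11…1₂` flips each of the `k` binary digits of `x`, so
the numbers of ones of `x` and of `2 ^ k - 1 - x` add up to `k`. Hence the reflection preserves
the parity of the digit sum when `k` is even and reverses it when `k` is odd.
-/

open Set

lemma Nat.digits_two_count_one_two_mul (n : ℕ) :
    (Nat.digits 2 (2 * n)).count 1 = (Nat.digits 2 n).count 1 := by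
  rcases n.eq_zero_or_pos with rfl | hn
  · simp
  · rw [← zero_add (2 * n), Nat.digits_add 2 one_lt_two 0 n two_pos (Or.inr hn.ne')]
    simp

lemma Nat.digits_two_count_one_two_mul_add_one (n : ℕ) :
    (Nat.digits 2 (2 * n + 1)).count 1 = (Nat.digits 2 n).count 1 + 1 := by
  rw [add_comm, Nat.digits_add 2 one_lt_two 1 n one_lt_two (Or.inl one_ne_zero)]
  simp

lemma Nat.digits_two_count_one_add_count_one_sub (k x : ℕ) (hx : x < 2 ^ k) :
    (Nat.digits 2 x).count 1 + (Nat.digits 2 (2 ^ k - 1 - x)).count 1 = k := by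
  induction k generalizing x with
  | zero => simp_all
  | succ k ih =>
    rw [pow_succ'] at hx ⊢
    obtain ⟨q, rfl | rfl⟩ := x.even_or_odd'
    · have hcompl : 2 * 2 ^ k - 1 - 2 * q = 2 * (2 ^ k - 1 - q) + 1 := by omega
      rw [hcompl, digits_two_count_one_two_mul, digits_two_count_one_two_mul_add_one]
      have := ih q (by omega)
      omega
    · have hcompl : 2 * 2 ^ k - 1 - (2 * q + 1) = 2 * (2 ^ k - 1 - q) := by omega
      rw [hcompl, digits_two_count_one_two_mul, digits_two_count_one_two_mul_add_one]
      have := ih q (by omega)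
      omega

lemma sub_mem_A_iff {k x : ℕ} (hx : x ≤ 2 ^ k - 1) : 2 ^ k - 1 - x ∈ A ↔ (x ∈ A ↔ Even k) := by
  have hsum := Nat.digits_two_count_one_add_count_one_sub k x
    (by have := Nat.one_le_two_pow (n := k); omega)
  have hparity := Nat.even_add (m := (Nat.digits 2 x).count 1)
    (n := (Nat.digits 2 (2 ^ k - 1 - x)).count 1)
  rw [hsum] at hparity
  simp only [A, mem_ofPred_eq]
  tauto

lemma image_sub_inter_Icc (n : ℕ) {S T : Set ℕ} (h : ∀ x ≤ n, n - x ∈ T ↔ x ∈ S) :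
    (fun x => n - x) '' (S ∩ Icc 0 n) = T ∩ Icc 0 n := by
  ext y
  simp only [mem_image, mem_inter_iff, mem_Icc, zero_le, true_and]
  constructor
  · rintro ⟨x, ⟨hxS, hxn⟩, rfl⟩
    exact ⟨(h x hxn).2 hxS, Nat.sub_le n x⟩
  · rintro ⟨hyT, hyn⟩
    refine ⟨n - y, ⟨(h (n - y) (Nat.sub_le n y)).1 ?_, Nat.sub_le n y⟩, Nat.sub_sub_self hyn⟩
    rwa [Nat.sub_sub_self hyn]

theorem stmt19_general (k : ℕ) :
    (Even k →
      (fun x => 2 ^ k - 1 - x) '' Al k = Al k ∧ (fun x => 2 ^ k - 1 - x) '' Bl k = Bl k) ∧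
    (Odd k →
      (fun x => 2 ^ k - 1 - x) '' Al k = Bl k ∧ (fun x => 2 ^ k - 1 - x) '' Bl k = Al k) := by
  constructor
  · intro hk
    have h : ∀ x ≤ 2 ^ k - 1, 2 ^ k - 1 - x ∈ A ↔ x ∈ A := fun x hx => by
      simp [sub_mem_A_iff hx, hk]
    exact ⟨image_sub_inter_Icc _ h, image_sub_inter_Icc _ fun x hx => not_congr (h x hx)⟩
  · intro hk
    have h : ∀ x ≤ 2 ^ k - 1, 2 ^ k - 1 - x ∈ A ↔ x ∈ B := fun x hx => by
      simp [sub_mem_A_iff hx, B, Nat.not_even_iff_odd.mpr hk]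
    exact ⟨image_sub_inter_Icc _ fun x hx => by simp [B, h x hx], image_sub_inter_Icc _ h⟩

theorem stmt19 (k : ℕ) (hk : 0 < k) :
    (Even k →
      (fun x => 2 ^ k - 1 - x) '' Al k = Al k ∧ (fun x => 2 ^ k - 1 - x) '' Bl k = Bl k) ∧
    (Odd k →
      (fun x => 2 ^ k - 1 - x) '' Al k = Bl k ∧ (fun x => 2 ^ k - 1 - x) '' Bl k = Al k) :=
  stmt19_general k
end
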